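/- arXiv:1809.11010 — 7 statements merged into one kernel-verified Lean document; each statement's English description precedes it below -/
import Mathlib

section
/- Let f₁ and f₂ be non-constant functions of class H, let c₁, c₂ > 0 and let c₃, c₄, c₅, c₆ be real numbers with c₃·c₅ < 0. Define f(x) = c₁·f₁(c₃x + c₄) + c₂·f₂(c₅x + c₆). Then the set F = argmax_{x ∈ ℝ} f(x) of global maximizers of f is a nonempty compact interval in ℝ (possibly a single point). -/
/-- `f` is affine on the set `s`. -/
def AffOn (f : ℝ → ℝ) (s : Set ℝ) : Prop := ∃ a c : ℝ, ∀ y ∈ s, f y = a * y + c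

/-- Left derivative of `f` at `x`. -/
noncomputable def lDeriv (f : ℝ → ℝ) (x : ℝ) : ℝ := derivWithin f (Set.Iio x) x

/-- Right derivative of `f` at `x`. -/
noncomputable def rDeriv (f : ℝ → ℝ) (x : ℝ) : ℝ := derivWithin f (Set.Ioi x) x

/-- `f` is piecewise affine with partition points `x 1 < x 2 < … < x N`
(no partition points if `N = 0`, in which case `f` is affine on all of `ℝ`). -/
def PWAff (f : ℝ → ℝ) (N : ℕ) (x : ℕ → ℝ) : Prop :=
  (∀ i, 1 ≤ i → i + 1 ≤ N → x i < x (i + 1)) ∧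
  (N = 0 → AffOn f Set.univ) ∧
  (1 ≤ N → AffOn f (Set.Iic (x 1)) ∧ AffOn f (Set.Ici (x N)) ∧
    ∀ i, 1 ≤ i → i + 1 ≤ N → AffOn f (Set.Icc (x i) (x (i + 1))))

/-- `f` belongs to class `H` as witnessed by the points `x 1 < … < x N`:
piecewise linear, concave on `ℝ`, and eventually constant. -/
def ClassHAux (f : ℝ → ℝ) (N : ℕ) (x : ℕ → ℝ) : Prop :=
  PWAff f N x ∧ ConcaveOn ℝ Set.univ f ∧ ∃ xb : ℝ, ∀ y, xb ≤ y → f y = f xb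

/-- `f` belongs to class `H`. -/
def ClassH (f : ℝ → ℝ) : Prop := ∃ N x, ClassHAux f N x

/-- `x 1 < … < x N` are the singular values of the class-`H` function `f`:
they partition `ℝ` into pieces on which `f` is affine and each of them is a genuine
kink, i.e. the right derivative is strictly smaller than the left derivative there. -/
def HasSingVals (f : ℝ → ℝ) (N : ℕ) (x : ℕ → ℝ) : Prop :=
  ClassHAux f N x ∧ ∀ i, 1 ≤ i → i ≤ N → rDeriv f (x i) < lDeriv f (x i)

/-- The dynamic-programming objective
`H(w,b) = R⁻¹ (p f(wR + b(u−R)) + (1−p) g(wR + b(d−R)))`. -/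
noncomputable def Hfun (R u d p : ℝ) (f g : ℝ → ℝ) (w b : ℝ) : ℝ :=
  R⁻¹ * (p * f (w * R + b * (u - R)) + (1 - p) * g (w * R + b * (d - R)))

/-- The value function `V(w) = sup_b H(w,b)`. -/
noncomputable def Vfun (R u d p : ℝ) (f g : ℝ → ℝ) (w : ℝ) : ℝ :=
  ⨆ b : ℝ, Hfun R u d p f g w b

/-- The set of maximizers `B(w) = {b : H(w,b) = V(w)}`. -/
noncomputable def Bset (R u d p : ℝ) (f g : ℝ → ℝ) (w : ℝ) : Set ℝ :=
  {b : ℝ | Hfun R u d p f g w b = Vfun R u d p f g w}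

/-- The minimal optimal strategy `β(w) = min B(w)`. -/
noncomputable def betaFun (R u d p : ℝ) (f g : ℝ → ℝ) (w : ℝ) : ℝ :=
  sInf (Bset R u d p f g w)

/-- The grid line `C^u = {(w,b) : wR + b(u−R) = c}`. -/
def Cu (R u : ℝ) (c : ℝ) : Set (ℝ × ℝ) := {pt | pt.1 * R + pt.2 * (u - R) = c}

/-- The grid line `C^d = {(w,b) : wR + b(d−R) = c}`. -/
def Cd (R d : ℝ) (c : ℝ) : Set (ℝ × ℝ) := {pt | pt.1 * R + pt.2 * (d - R) = c}

/-- The grid `G`, the union of the lines `C^u_i`, `1 ≤ i ≤ Nu`, and `C^d_j`, `1 ≤ j ≤ Nd`. -/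
def Grid (R u d : ℝ) (Nu : ℕ) (xu : ℕ → ℝ) (Nd : ℕ) (xd : ℕ → ℝ) : Set (ℝ × ℝ) :=
  (⋃ i ∈ Finset.Icc 1 Nu, Cu R u (xu i)) ∪ (⋃ j ∈ Finset.Icc 1 Nd, Cd R d (xd j))

/-- The open parallelogram `D_ij`, for `0 ≤ i ≤ Nu`, `0 ≤ j ≤ Nd`, with the conventions
`x^u_0 = x^d_0 = −∞` and `x^u_{Nu+1} = x^d_{Nd+1} = +∞`. -/
def Dset (R u d : ℝ) (Nu : ℕ) (xu : ℕ → ℝ) (Nd : ℕ) (xd : ℕ → ℝ) (i j : ℕ) : Set (ℝ × ℝ) :=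
  {pt | (1 ≤ i → xu i < pt.1 * R + pt.2 * (u - R)) ∧
        (i < Nu → pt.1 * R + pt.2 * (u - R) < xu (i + 1)) ∧
        (1 ≤ j → xd j < pt.1 * R + pt.2 * (d - R)) ∧
        (j < Nd → pt.1 * R + pt.2 * (d - R) < xd (j + 1))}

/-!
A concave function that is constant on `[x̄, ∞)` attains its maximum there, and if it is not
constant, concavity forces it below a line of positive slope, so it tends to `-∞` at `-∞`.
Since `c₃` and `c₅` have opposite signs, one summand of `f` tends to `-∞` at `-∞`, the other at
`+∞`, while both are bounded above; hence `f` is a continuous concave function tending to `-∞`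
at both ends. Its set of maximizers is then nonempty and compact, and convex as a superlevel set
of a concave function, i.e. a compact interval.
-/

open Filter Set

namespace ConcaveOn

variable {f : ℝ → ℝ} {xb : ℝ}

theorem le_of_const_on_Ici (hf : ConcaveOn ℝ univ f) (hxb : ∀ y, xb ≤ y → f y = f xb) (y : ℝ) :
    f y ≤ f xb := by
  rcases le_or_gt xb y with hy | hy
  · exact (hxb y hy).le
  · have hslope := hf.slope_anti_adjacent (mem_univ y) (mem_univ (xb + 1)) hy (lt_add_one xb)
    rw [hxb _ (lt_add_one xb).le, sub_self, zero_div,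
      le_div_iff₀ (sub_pos.2 hy)] at hslope
    linarith

theorem tendsto_atBot_of_const_on_Ici (hf : ConcaveOn ℝ univ f)
    (hxb : ∀ y, xb ≤ y → f y = f xb) (hnc : ∃ a b : ℝ, f a ≠ f b) : Tendsto f atBot atBot := by
  obtain ⟨a, ha⟩ : ∃ a, f a < f xb := by
    by_contra! hall
    obtain ⟨u, v, huv⟩ := hnc
    exact huv (((hf.le_of_const_on_Ici hxb u).antisymm (hall u)).trans
      ((hf.le_of_const_on_Ici hxb v).antisymm (hall v)).symm)
  have hax : a < xb := lt_of_not_ge fun h => ha.ne (hxb a h)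
  set m := (f xb - f a) / (xb - a)
  have hm : 0 < m := div_pos (sub_pos.2 ha) (sub_pos.2 hax)
  have hbound : ∀ z < a, f z ≤ m * z + (f a - m * a) := by
    intro z hz
    have hslope := hf.slope_anti_adjacent (mem_univ z) (mem_univ xb) hz hax
    rw [le_div_iff₀ (sub_pos.2 hz)] at hslope
    linarith
  refine tendsto_atBot_mono' _ ?_
    (tendsto_atBot_add_const_right _ (f a - m * a) (tendsto_id.const_mul_atBot hm))
  filter_upwards [eventually_lt_atBot a] using hbound

theorem comp_mul_add (hf : ConcaveOn ℝ univ f) (a b : ℝ) :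
    ConcaveOn ℝ univ fun x => f (a * x + b) := by
  have hcomp : (fun x => f (a * x + b)) = f ∘ AffineMap.lineMap b (a + b) := by
    ext x
    simp only [Function.comp_apply, AffineMap.lineMap_apply_module]
    ring_nf
  rw [hcomp]
  simpa using hf.comp_affineMap (AffineMap.lineMap b (a + b))

end ConcaveOn

theorem setOf_forall_apply_le_eq {X : Type*} {f : X → ℝ} {x₀ : X} (hx₀ : ∀ y, f y ≤ f x₀) :
    {x | ∀ y, f y ≤ f x} = {x | f x₀ ≤ f x} :=
  Set.ext fun _ => ⟨fun hx => hx x₀, fun hx y => (hx₀ y).trans hx⟩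

theorem isCompact_setOf_forall_apply_le {X : Type*} [TopologicalSpace X] {f : X → ℝ}
    (hf : Continuous f) (hbot : Tendsto f (cocompact X) atBot) :
    IsCompact {x | ∀ y, f y ≤ f x} := by
  rcases eq_empty_or_nonempty {x | ∀ y, f y ≤ f x} with hempty | ⟨x₀, hx₀⟩
  · exact hempty ▸ isCompact_empty
  obtain ⟨K, hK, hsub⟩ := mem_cocompact'.1 (hbot.eventually (eventually_lt_atBot (f x₀)))
  rw [setOf_forall_apply_le_eq hx₀]
  exact hK.of_isClosed_subset (isClosed_le continuous_const hf)
    fun x (hx : f x₀ ≤ f x) => hsub hx.not_gt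

theorem ConcaveOn.argmax_nonempty_isCompact_eq_Icc {f : ℝ → ℝ} (hf : ConcaveOn ℝ univ f)
    (hbot : Tendsto f (cocompact ℝ) atBot) :
    {x | ∀ y, f y ≤ f x}.Nonempty ∧ IsCompact {x | ∀ y, f y ≤ f x} ∧
      ∃ a b, {x | ∀ y, f y ≤ f x} = Icc a b := by
  have hcont : Continuous f := continuousOn_univ.1 (hf.continuousOn isOpen_univ)
  obtain ⟨x₀, hx₀⟩ := hcont.exists_forall_ge hbot
  have hcompact := isCompact_setOf_forall_apply_le hcont hbot
  have hconvex : Convex ℝ {x | ∀ y, f y ≤ f x} := by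
    simpa [setOf_forall_apply_le_eq hx₀] using hf.convex_ge (f x₀)
  exact ⟨⟨x₀, hx₀⟩, hcompact, _, _,
    eq_Icc_of_connected_compact (hconvex.isConnected ⟨x₀, hx₀⟩) hcompact⟩

theorem tendsto_cocompact_atBot_of_opposite_slopes {F G : ℝ → ℝ} {M N : ℝ}
    (hF : Tendsto F atBot atBot) (hG : Tendsto G atBot atBot)
    (hFM : ∀ y, F y ≤ M) (hGN : ∀ y, G y ≤ N) {c₁ c₂ a b p q : ℝ} (hc₁ : 0 < c₁) (hc₂ : 0 < c₂)
    (ha : 0 < a) (hb : b < 0) :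
    Tendsto (fun x => c₁ * F (a * x + p) + c₂ * G (b * x + q)) (cocompact ℝ) atBot := by
  rw [cocompact_eq_atBot_atTop, tendsto_sup]
  constructor
  · refine tendsto_atBot_add_right_of_ge _ (c₂ * N) ?_ fun x => by gcongr; exact hGN _
    exact (hF.comp (tendsto_atBot_add_const_right _ p
      (tendsto_id.const_mul_atBot ha))).const_mul_atBot hc₁
  · refine tendsto_atBot_add_left_of_ge _ (c₁ * M) (fun x => by gcongr; exact hFM _) ?_
    exact (hG.comp (tendsto_atBot_add_const_right _ q
      (tendsto_id.const_mul_atTop_of_neg hb))).const_mul_atBot hc₂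

/-- For non-constant class-`H` functions `f₁, f₂`, positive `c₁, c₂` and
`c₃ c₅ < 0`, the set of global maximizers of
`f(x) = c₁ f₁(c₃ x + c₄) + c₂ f₂(c₅ x + c₆)` is a nonempty compact interval. -/
theorem stmt_3 (f₁ f₂ : ℝ → ℝ) (hf₁ : ClassH f₁) (hf₂ : ClassH f₂)
    (hnc₁ : ∃ a b : ℝ, f₁ a ≠ f₁ b) (hnc₂ : ∃ a b : ℝ, f₂ a ≠ f₂ b)
    (c₁ c₂ c₃ c₄ c₅ c₆ : ℝ) (hc₁ : 0 < c₁) (hc₂ : 0 < c₂) (hc₃₅ : c₃ * c₅ < 0)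
    (f : ℝ → ℝ) (hf : ∀ x, f x = c₁ * f₁ (c₃ * x + c₄) + c₂ * f₂ (c₅ * x + c₆)) :
    ({x : ℝ | ∀ y : ℝ, f y ≤ f x}).Nonempty ∧
    IsCompact {x : ℝ | ∀ y : ℝ, f y ≤ f x} ∧
    ∃ a b : ℝ, {x : ℝ | ∀ y : ℝ, f y ≤ f x} = Set.Icc a b := by
  obtain ⟨-, -, -, hcv₁, xb₁, hxb₁⟩ := hf₁
  obtain ⟨-, -, -, hcv₂, xb₂, hxb₂⟩ := hf₂
  obtain rfl : f = fun x => c₁ * f₁ (c₃ * x + c₄) + c₂ * f₂ (c₅ * x + c₆) := funext hf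
  have hconc : ConcaveOn ℝ univ fun x => c₁ * f₁ (c₃ * x + c₄) + c₂ * f₂ (c₅ * x + c₆) :=
    ((hcv₁.comp_mul_add c₃ c₄).smul hc₁.le).add ((hcv₂.comp_mul_add c₅ c₆).smul hc₂.le)
  refine hconc.argmax_nonempty_isCompact_eq_Icc ?_
  have ht₁ := hcv₁.tendsto_atBot_of_const_on_Ici hxb₁ hnc₁
  have ht₂ := hcv₂.tendsto_atBot_of_const_on_Ici hxb₂ hnc₂
  have hM₁ := hcv₁.le_of_const_on_Ici hxb₁
  have hM₂ := hcv₂.le_of_const_on_Ici hxb₂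
  rcases lt_or_gt_of_ne (left_ne_zero_of_mul hc₃₅.ne) with hc₃ | hc₃
  · have hc₅ : 0 < c₅ := pos_of_mul_neg_right hc₃₅ hc₃.le
    simpa only [add_comm] using
      tendsto_cocompact_atBot_of_opposite_slopes ht₂ ht₁ hM₂ hM₁ hc₂ hc₁ hc₅ hc₃
  · have hc₅ : c₅ < 0 := neg_of_mul_neg_right hc₃₅ hc₃.le
    exact tendsto_cocompact_atBot_of_opposite_slopes ht₁ ht₂ hM₁ hM₂ hc₁ hc₂ hc₃ hc₅
end

section
/- At every intersection with the grid the derivative strictly decreases: if w, b₀ ∈ ℝ and (w, b₀) ∈ G, then the left derivative of b ↦ H(w, b) at b₀ is strictly greater than its right derivative at b₀; likewise, if w₀, b ∈ ℝ and (w₀, b) ∈ G, then the left derivative of w ↦ H(w, b) at w₀ is strictly greater than its right derivative at w₀. -/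
open Set

private lemma lDeriv_of_affine {f : ℝ → ℝ} {t m c ε : ℝ} (hε : 0 < ε)
    (h : ∀ y ∈ Icc (t - ε) t, f y = m * y + c) : lDeriv f t = m := by
  have haff : HasDerivAt (fun y : ℝ => m * y + c) m t := by
    simpa using ((hasDerivAt_id t).const_mul m).add_const c
  have heq : f =ᶠ[nhdsWithin t (Iio t)] (fun y => m * y + c) := by
    filter_upwards [Ioo_mem_nhdsLT_of_mem
      (show t ∈ Ioc (t - ε) t from ⟨by linarith, le_refl t⟩)] with y hy
    exact h y ⟨le_of_lt hy.1, le_of_lt hy.2⟩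
  have hft : f t = m * t + c := h t ⟨by linarith, le_refl t⟩
  exact (haff.hasDerivWithinAt.congr_of_eventuallyEq heq hft).derivWithin
    (uniqueDiffWithinAt_Iio t)

private lemma rDeriv_of_affine {f : ℝ → ℝ} {t m c ε : ℝ} (hε : 0 < ε)
    (h : ∀ y ∈ Icc t (t + ε), f y = m * y + c) : rDeriv f t = m := by
  have haff : HasDerivAt (fun y : ℝ => m * y + c) m t := by
    simpa using ((hasDerivAt_id t).const_mul m).add_const c
  have heq : f =ᶠ[nhdsWithin t (Ioi t)] (fun y => m * y + c) := by
    filter_upwards [Ioo_mem_nhdsGT_of_mem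
      (show t ∈ Ico t (t + ε) from ⟨le_refl t, by linarith⟩)] with y hy
    exact h y ⟨le_of_lt hy.1, le_of_lt hy.2⟩
  have hft : f t = m * t + c := h t ⟨le_refl t, by linarith⟩
  exact (haff.hasDerivWithinAt.congr_of_eventuallyEq heq hft).derivWithin
    (uniqueDiffWithinAt_Ioi t)

private lemma pwAff_left {f : ℝ → ℝ} {N : ℕ} {x : ℕ → ℝ} (hf : PWAff f N x)
    (hN : 1 ≤ N) (t : ℝ) :
    ∃ ε > 0, ∃ m c : ℝ, ∀ y ∈ Icc (t - ε) t, f y = m * y + c := by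
  obtain ⟨hord, -, hp⟩ := hf
  obtain ⟨⟨m1, c1, h1⟩, ⟨mN, cN, hNp⟩, hmid⟩ := hp hN
  by_cases ht : t ≤ x 1
  · exact ⟨1, one_pos, m1, c1, fun y hy => h1 y (le_trans hy.2 ht)⟩
  push_neg at ht
  obtain ⟨i, him, hmax⟩ : ∃ i ∈ (Finset.Icc 1 N).filter (fun i => x i < t),
      ∀ j ∈ (Finset.Icc 1 N).filter (fun i => x i < t), j ≤ i := by
    have hne : ((Finset.Icc 1 N).filter (fun i => x i < t)).Nonempty :=
      ⟨1, by simp [hN, ht]⟩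
    exact ⟨_, Finset.max'_mem _ hne, fun j hj => Finset.le_max' _ j hj⟩
  have hi1 : 1 ≤ i := (Finset.mem_Icc.1 (Finset.mem_filter.1 him).1).1
  have hiN : i ≤ N := (Finset.mem_Icc.1 (Finset.mem_filter.1 him).1).2
  have hit : x i < t := (Finset.mem_filter.1 him).2
  rcases eq_or_lt_of_le hiN with hieq | hilt
  · refine ⟨t - x i, by linarith, mN, cN, fun y hy => hNp y ?_⟩
    have : x i ≤ y := by linarith [hy.1]
    rw [← hieq]; exact this
  · have hle : t ≤ x (i + 1) := by
      by_contra hlt; push_neg at hlt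
      have hmem : i + 1 ∈ (Finset.Icc 1 N).filter (fun i => x i < t) :=
        Finset.mem_filter.2 ⟨Finset.mem_Icc.2 ⟨by omega, by omega⟩, hlt⟩
      have := hmax _ hmem; omega
    obtain ⟨m, c, hm⟩ := hmid i hi1 (by omega)
    exact ⟨t - x i, by linarith, m, c, fun y hy =>
      hm y ⟨by linarith [hy.1], le_trans hy.2 hle⟩⟩

private lemma pwAff_right {f : ℝ → ℝ} {N : ℕ} {x : ℕ → ℝ} (hf : PWAff f N x)
    (hN : 1 ≤ N) (t : ℝ) :
    ∃ ε > 0, ∃ m c : ℝ, ∀ y ∈ Icc t (t + ε), f y = m * y + c := by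
  obtain ⟨hord, -, hp⟩ := hf
  obtain ⟨⟨m1, c1, h1⟩, ⟨mN, cN, hNp⟩, hmid⟩ := hp hN
  by_cases ht : x N ≤ t
  · exact ⟨1, one_pos, mN, cN, fun y hy => hNp y (le_trans ht hy.1)⟩
  push_neg at ht
  obtain ⟨i, him, hmin⟩ : ∃ i ∈ (Finset.Icc 1 N).filter (fun i => t < x i),
      ∀ j ∈ (Finset.Icc 1 N).filter (fun i => t < x i), i ≤ j := by
    have hne : ((Finset.Icc 1 N).filter (fun i => t < x i)).Nonempty :=
      ⟨N, by simp [hN, ht]⟩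
    exact ⟨_, Finset.min'_mem _ hne, fun j hj => Finset.min'_le _ j hj⟩
  have hi1 : 1 ≤ i := (Finset.mem_Icc.1 (Finset.mem_filter.1 him).1).1
  have hiN : i ≤ N := (Finset.mem_Icc.1 (Finset.mem_filter.1 him).1).2
  have hit : t < x i := (Finset.mem_filter.1 him).2
  rcases eq_or_lt_of_le hi1 with hieq | hgt
  · refine ⟨x i - t, by linarith, m1, c1, fun y hy => h1 y ?_⟩
    have : y ≤ x i := by linarith [hy.2]
    rw [hieq]; exact this
  · have hle : x (i - 1) ≤ t := by
      by_contra hlt; push_neg at hlt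
      have hmem : i - 1 ∈ (Finset.Icc 1 N).filter (fun i => t < x i) :=
        Finset.mem_filter.2 ⟨Finset.mem_Icc.2 ⟨by omega, by omega⟩, hlt⟩
      have := hmin _ hmem; omega
    obtain ⟨m, c, hm⟩ := hmid (i - 1) (by omega) (by omega)
    have hii : i - 1 + 1 = i := by omega
    rw [hii] at hm
    exact ⟨x i - t, by linarith, m, c, fun y hy =>
      hm y ⟨le_trans hle hy.1, by linarith [hy.2]⟩⟩

private lemma localData {f : ℝ → ℝ} {N : ℕ} {x : ℕ → ℝ} (hpw : PWAff f N x)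
    (hconc : ConcaveOn ℝ Set.univ f) (hN : 1 ≤ N) (T : ℝ) :
    ∃ δ > 0, ∃ p q cl cr : ℝ,
      (∀ y ∈ Icc (T - δ) T, f y = p * y + cl) ∧
      (∀ y ∈ Icc T (T + δ), f y = q * y + cr) ∧
      lDeriv f T = p ∧ rDeriv f T = q ∧ q ≤ p := by
  obtain ⟨ε₁, hε₁, p, cl, hl⟩ := pwAff_left hpw hN T
  obtain ⟨ε₂, hε₂, q, cr, hr⟩ := pwAff_right hpw hN T
  have hδ : (0:ℝ) < min ε₁ ε₂ := lt_min hε₁ hε₂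
  set δ := min ε₁ ε₂ with hδdef
  have hl' : ∀ y ∈ Icc (T - δ) T, f y = p * y + cl := fun y hy =>
    hl y ⟨by have := min_le_left ε₁ ε₂; simp only [← hδdef] at *; linarith [hy.1], hy.2⟩
  have hr' : ∀ y ∈ Icc T (T + δ), f y = q * y + cr := fun y hy =>
    hr y ⟨hy.1, by have := min_le_right ε₁ ε₂; simp only [← hδdef] at *; linarith [hy.2]⟩
  have hlD := lDeriv_of_affine hδ hl'
  have hrD := rDeriv_of_affine hδ hr'
  have hqp : q ≤ p := by
    have h2 := hconc.2 (Set.mem_univ (T - δ)) (Set.mem_univ (T + δ))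
      (by norm_num : (0:ℝ) ≤ 1/2) (by norm_num : (0:ℝ) ≤ 1/2) (by norm_num)
    simp only [smul_eq_mul] at h2
    rw [show (1/2 : ℝ) * (T - δ) + (1/2) * (T + δ) = T by ring] at h2
    have e1 : f (T - δ) = p * (T - δ) + cl := hl' _ ⟨le_refl _, by linarith⟩
    have e2 : f (T + δ) = q * (T + δ) + cr := hr' _ ⟨by linarith, le_refl _⟩
    have e3 : f T = p * T + cl := hl' _ ⟨by linarith, le_refl _⟩
    have e4 : f T = q * T + cr := hr' _ ⟨le_refl _, by linarith⟩
    nlinarith [h2, hδ]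
  exact ⟨δ, hδ, p, q, cl, cr, hl', hr', hlD, hrD, hqp⟩

private lemma comp_affine {f : ℝ → ℝ} {T δ p q cl cr s a b₀ : ℝ} (hδ : 0 < δ) (hs : s ≠ 0)
    (hT : T = a + s * b₀)
    (hl : ∀ y ∈ Icc (T - δ) T, f y = p * y + cl)
    (hr : ∀ y ∈ Icc T (T + δ), f y = q * y + cr) :
    ∃ ε > 0, ∃ ml el mr er : ℝ,
      (∀ y ∈ Icc (b₀ - ε) b₀, f (a + s * y) = ml * y + el) ∧
      (∀ y ∈ Icc b₀ (b₀ + ε), f (a + s * y) = mr * y + er) ∧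
      ml - mr = |s| * (p - q) := by
  subst hT
  rcases hs.lt_or_gt with hneg | hpos
  · have hns : 0 < -s := neg_pos.2 hneg
    have h4 : (-s) * (δ / (-s)) = δ := by field_simp
    refine ⟨δ / (-s), div_pos hδ hns, s * q, q * a + cr, s * p, p * a + cl, ?_, ?_, ?_⟩
    · intro y hy
      have hy1 : b₀ - y ≤ δ / (-s) := by linarith [hy.1]
      have hb1 : a + s * b₀ ≤ a + s * y := by nlinarith [hy.2]
      have h3 : (-s) * (b₀ - y) ≤ (-s) * (δ / (-s)) := mul_le_mul_of_nonneg_left hy1 hns.le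
      have hb2 : a + s * y ≤ a + s * b₀ + δ := by nlinarith
      rw [hr _ ⟨hb1, hb2⟩]; ring
    · intro y hy
      have hy1 : y - b₀ ≤ δ / (-s) := by linarith [hy.2]
      have hb1 : a + s * y ≤ a + s * b₀ := by nlinarith [hy.1]
      have h3 : (-s) * (y - b₀) ≤ (-s) * (δ / (-s)) := mul_le_mul_of_nonneg_left hy1 hns.le
      have hb2 : a + s * b₀ - δ ≤ a + s * y := by nlinarith
      rw [hl _ ⟨hb2, hb1⟩]; ring
    · rw [abs_of_neg hneg]; ring
  · have h4 : s * (δ / s) = δ := by field_simp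
    refine ⟨δ / s, div_pos hδ hpos, s * p, p * a + cl, s * q, q * a + cr, ?_, ?_, ?_⟩
    · intro y hy
      have hy1 : b₀ - y ≤ δ / s := by linarith [hy.1]
      have hb2 : a + s * y ≤ a + s * b₀ := by nlinarith [hy.2]
      have h3 : s * (b₀ - y) ≤ s * (δ / s) := mul_le_mul_of_nonneg_left hy1 hpos.le
      have hb1 : a + s * b₀ - δ ≤ a + s * y := by nlinarith
      rw [hl _ ⟨hb1, hb2⟩]; ring
    · intro y hy
      have hy1 : y - b₀ ≤ δ / s := by linarith [hy.2]
      have hb1 : a + s * b₀ ≤ a + s * y := by nlinarith [hy.1]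
      have h3 : s * (y - b₀) ≤ s * (δ / s) := mul_le_mul_of_nonneg_left hy1 hpos.le
      have hb2 : a + s * y ≤ a + s * b₀ + δ := by nlinarith
      rw [hr _ ⟨hb1, hb2⟩]; ring
    · rw [abs_of_pos hpos]; ring

private lemma master {f g : ℝ → ℝ} {Nu Nd : ℕ} {xu xd : ℕ → ℝ}
    (hf : HasSingVals f Nu xu) (hg : HasSingVals g Nd xd)
    (hNu : 1 ≤ Nu) (hNd : 1 ≤ Nd)
    {c₁ c₂ s₁ s₂ a₁ a₂ b₀ : ℝ} (hc₁ : 0 < c₁) (hc₂ : 0 < c₂)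
    (hs₁ : s₁ ≠ 0) (hs₂ : s₂ ≠ 0)
    {F : ℝ → ℝ} (hF : ∀ y, F y = c₁ * f (a₁ + s₁ * y) + c₂ * g (a₂ + s₂ * y))
    (hkink : rDeriv f (a₁ + s₁ * b₀) < lDeriv f (a₁ + s₁ * b₀) ∨
             rDeriv g (a₂ + s₂ * b₀) < lDeriv g (a₂ + s₂ * b₀)) :
    rDeriv F b₀ < lDeriv F b₀ := by
  obtain ⟨⟨hpwf, hcf, -⟩, -⟩ := hf
  obtain ⟨⟨hpwg, hcg, -⟩, -⟩ := hg
  obtain ⟨δ₁, hδ₁, p₁, q₁, cl₁, cr₁, hfl, hfr, hfL, hfR, hfqp⟩ :=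
    localData hpwf hcf hNu (a₁ + s₁ * b₀)
  obtain ⟨δ₂, hδ₂, p₂, q₂, cl₂, cr₂, hgl, hgr, hgL, hgR, hgqp⟩ :=
    localData hpwg hcg hNd (a₂ + s₂ * b₀)
  obtain ⟨ε₁, hε₁, ml₁, el₁, mr₁, er₁, h1l, h1r, h1d⟩ := comp_affine hδ₁ hs₁ rfl hfl hfr
  obtain ⟨ε₂, hε₂, ml₂, el₂, mr₂, er₂, h2l, h2r, h2d⟩ := comp_affine hδ₂ hs₂ rfl hgl hgr
  have hε : (0:ℝ) < min ε₁ ε₂ := lt_min hε₁ hε₂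
  have hFl : ∀ y ∈ Icc (b₀ - min ε₁ ε₂) b₀,
      F y = (c₁ * ml₁ + c₂ * ml₂) * y + (c₁ * el₁ + c₂ * el₂) := by
    intro y hy
    rw [hF y, h1l y ⟨by have := min_le_left ε₁ ε₂; linarith [hy.1], hy.2⟩,
        h2l y ⟨by have := min_le_right ε₁ ε₂; linarith [hy.1], hy.2⟩]
    ring
  have hFr : ∀ y ∈ Icc b₀ (b₀ + min ε₁ ε₂),
      F y = (c₁ * mr₁ + c₂ * mr₂) * y + (c₁ * er₁ + c₂ * er₂) := by
    intro y hy
    rw [hF y, h1r y ⟨hy.1, by have := min_le_left ε₁ ε₂; linarith [hy.2]⟩,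
        h2r y ⟨hy.1, by have := min_le_right ε₁ ε₂; linarith [hy.2]⟩]
    ring
  rw [lDeriv_of_affine hε hFl, rDeriv_of_affine hε hFr]
  have habs₁ : (0:ℝ) < |s₁| := abs_pos.2 hs₁
  have habs₂ : (0:ℝ) < |s₂| := abs_pos.2 hs₂
  rcases hkink with hk | hk
  · rw [hfL, hfR] at hk
    have t1 : 0 < c₁ * (ml₁ - mr₁) := by
      rw [h1d]; exact mul_pos hc₁ (mul_pos habs₁ (sub_pos.2 hk))
    have t2 : 0 ≤ c₂ * (ml₂ - mr₂) := by
      rw [h2d]; exact mul_nonneg hc₂.le (mul_nonneg habs₂.le (sub_nonneg.2 hgqp))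
    nlinarith [t1, t2]
  · rw [hgL, hgR] at hk
    have t1 : 0 ≤ c₁ * (ml₁ - mr₁) := by
      rw [h1d]; exact mul_nonneg hc₁.le (mul_nonneg habs₁.le (sub_nonneg.2 hfqp))
    have t2 : 0 < c₂ * (ml₂ - mr₂) := by
      rw [h2d]; exact mul_pos hc₂ (mul_pos habs₂ (sub_pos.2 hk))
    nlinarith [t1, t2]

/-- At every intersection with the grid `G`, the derivative of the section
functions `b ↦ H(w,b)` and `w ↦ H(w,b)` strictly decreases: the left derivative is
strictly greater than the right derivative there. -/
theorem stmt_5 (R u d p : ℝ) (hd : 0 < d) (hdR : d < R) (hRu : R < u)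
    (hp0 : 0 < p) (hp1 : p < 1)
    (f g : ℝ → ℝ) (Nu Nd : ℕ) (xu xd : ℕ → ℝ)
    (hf : HasSingVals f Nu xu) (hg : HasSingVals g Nd xd)
    (hNu : 1 ≤ Nu) (hNd : 1 ≤ Nd)
    (hfnc : ∃ a b : ℝ, f a ≠ f b) (hgnc : ∃ a b : ℝ, g a ≠ g b) :
    (∀ w b₀ : ℝ, (w, b₀) ∈ Grid R u d Nu xu Nd xd →
      rDeriv (fun b => Hfun R u d p f g w b) b₀ <
        lDeriv (fun b => Hfun R u d p f g w b) b₀) ∧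
    (∀ w₀ b : ℝ, (w₀, b) ∈ Grid R u d Nu xu Nd xd →
      rDeriv (fun w => Hfun R u d p f g w b) w₀ <
        lDeriv (fun w => Hfun R u d p f g w b) w₀) := by
  have hR0 : (0:ℝ) < R := lt_trans hd hdR
  have hc₁ : 0 < R⁻¹ * p := by positivity
  have h1p : 0 < 1 - p := by linarith
  have hc₂ : 0 < R⁻¹ * (1 - p) := by positivity
  have hsu : u - R ≠ 0 := ne_of_gt (by linarith)
  have hsd : d - R ≠ 0 := ne_of_lt (by linarith)
  have hsR : R ≠ 0 := ne_of_gt hR0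
  constructor
  · intro w b₀ hmem
    simp only [Grid, Set.mem_union, Set.mem_iUnion, Cu, Cd, Set.mem_setOf_eq,
      Finset.mem_Icc, exists_prop] at hmem
    have hF : ∀ y, Hfun R u d p f g w y =
        (R⁻¹ * p) * f (w * R + (u - R) * y) + (R⁻¹ * (1 - p)) * g (w * R + (d - R) * y) := by
      intro y
      rw [Hfun, show w * R + y * (u - R) = w * R + (u - R) * y by ring,
          show w * R + y * (d - R) = w * R + (d - R) * y by ring]
      ring
    refine master hf hg hNu hNd hc₁ hc₂ hsu hsd hF ?_
    rcases hmem with ⟨i, ⟨hi1, hi2⟩, hxi⟩ | ⟨j, ⟨hj1, hj2⟩, hxj⟩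
    · left
      rw [show w * R + (u - R) * b₀ = xu i by linear_combination hxi]
      exact hf.2 i hi1 hi2
    · right
      rw [show w * R + (d - R) * b₀ = xd j by linear_combination hxj]
      exact hg.2 j hj1 hj2
  · intro w₀ b hmem
    simp only [Grid, Set.mem_union, Set.mem_iUnion, Cu, Cd, Set.mem_setOf_eq,
      Finset.mem_Icc, exists_prop] at hmem
    have hF : ∀ y, Hfun R u d p f g y b =
        (R⁻¹ * p) * f (b * (u - R) + R * y) + (R⁻¹ * (1 - p)) * g (b * (d - R) + R * y) := by
      intro y
      rw [Hfun, show y * R + b * (u - R) = b * (u - R) + R * y by ring,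
          show y * R + b * (d - R) = b * (d - R) + R * y by ring]
      ring
    refine master hf hg hNu hNd hc₁ hc₂ hsR hsR hF ?_
    rcases hmem with ⟨i, ⟨hi1, hi2⟩, hxi⟩ | ⟨j, ⟨hj1, hj2⟩, hxj⟩
    · left
      rw [show b * (u - R) + R * w₀ = xu i by linear_combination hxi]
      exact hf.2 i hi1 hi2
    · right
      rw [show b * (d - R) + R * w₀ = xd j by linear_combination hxj]
      exact hg.2 j hj1 hj2
end

section
/- Suppose b ∈ ℝ satisfies H(w, b) = V(w) (i.e. b is a maximizer of b' ↦ H(w, b')) and (w, b) ∈ D_ij for some 0 ≤ i ≤ N_u, 0 ≤ j ≤ N_d. Then H(w, b₁) = H(w, b) for every b₁ with (w, b₁) in the closure of D_ij, and H(w, b₂) < H(w, b) for every b₂ with (w, b₂) not in the closure of D_ij. -/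
/-! ### Auxiliary lemmas -/

lemma rderiv_eq' (f : ℝ → ℝ) (a c x z : ℝ) (hxz : x < z)
    (h : ∀ y ∈ Set.Ico x z, f y = a * y + c) : rDeriv f x = a := by
  have haff : HasDerivWithinAt (fun y => a * y + c) a (Set.Ioi x) x := by
    simpa using (((hasDerivAt_id x).const_mul a).add_const c).hasDerivWithinAt
  have hev : f =ᶠ[nhdsWithin x (Set.Ioi x)] (fun y => a * y + c) := by
    filter_upwards [Ioo_mem_nhdsGT_of_mem (Set.mem_Ico.mpr ⟨le_refl x, hxz⟩)] with y hy
    exact h y ⟨hy.1.le, hy.2⟩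
  have hx : f x = a * x + c := h x ⟨le_refl x, hxz⟩
  exact (haff.congr_of_eventuallyEq hev hx).derivWithin (uniqueDiffWithinAt_Ioi x)

lemma lderiv_eq' (f : ℝ → ℝ) (a c x z : ℝ) (hzx : z < x)
    (h : ∀ y ∈ Set.Ioc z x, f y = a * y + c) : lDeriv f x = a := by
  have haff : HasDerivWithinAt (fun y => a * y + c) a (Set.Iio x) x := by
    simpa using (((hasDerivAt_id x).const_mul a).add_const c).hasDerivWithinAt
  have hev : f =ᶠ[nhdsWithin x (Set.Iio x)] (fun y => a * y + c) := by
    filter_upwards [Ioo_mem_nhdsLT_of_mem (Set.mem_Ioc.mpr ⟨hzx, le_refl x⟩)] with y hy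
    exact h y ⟨hy.1, hy.2.le⟩
  have hx : f x = a * x + c := h x ⟨hzx, le_refl x⟩
  exact (haff.congr_of_eventuallyEq hev hx).derivWithin (uniqueDiffWithinAt_Iio x)

/-- the k-th affine piece of a piecewise affine function, `k = 0..N`. -/
def piece (N : ℕ) (x : ℕ → ℝ) (k : ℕ) : Set ℝ :=
  if k = 0 then Set.Iic (x 1) else if N ≤ k then Set.Ici (x N) else Set.Icc (x k) (x (k+1))

lemma piece_aff {f : ℝ → ℝ} {N : ℕ} {x : ℕ → ℝ} (hf : PWAff f N x) (hN : 1 ≤ N)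
    {k : ℕ} (hk : k ≤ N) : ∃ a c : ℝ, ∀ y ∈ piece N x k, f y = a * y + c := by
  obtain ⟨h0, hNp, hend⟩ := (hf.2.2 hN)
  by_cases hk0 : k = 0
  · have he : piece N x k = Set.Iic (x 1) := by simp [piece, hk0]
    rw [he]; exact h0
  · by_cases hkN : N ≤ k
    · have he : piece N x k = Set.Ici (x N) := by simp [piece, hk0, hkN]
      rw [he]; exact hNp
    · have he : piece N x k = Set.Icc (x k) (x (k+1)) := by simp [piece, hk0, hkN]
      rw [he]; exact hend k (by omega) (by omega)

lemma mem_piece {N : ℕ} {x : ℕ → ℝ} (hN : 1 ≤ N) {k : ℕ} (hk : k ≤ N) {y : ℝ}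
    (h1 : 1 ≤ k → x k ≤ y) (h2 : k < N → y ≤ x (k+1)) : y ∈ piece N x k := by
  by_cases hk0 : k = 0
  · have he : piece N x k = Set.Iic (x 1) := by simp [piece, hk0]
    rw [he]
    have := h2 (by omega)
    simpa [hk0] using this
  · by_cases hkN : N ≤ k
    · have he : piece N x k = Set.Ici (x N) := by simp [piece, hk0, hkN]
      rw [he]
      have hkn : k = N := by omega
      exact hkn ▸ h1 (by omega)
    · have he : piece N x k = Set.Icc (x k) (x (k+1)) := by simp [piece, hk0, hkN]
      rw [he]
      exact ⟨h1 (by omega), h2 (by omega)⟩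

/-- slopes strictly decrease across each singular value -/
lemma slope_lt {f : ℝ → ℝ} {N : ℕ} {x : ℕ → ℝ} (hf : HasSingVals f N x) (hN : 1 ≤ N)
    {k : ℕ} (hk1 : 1 ≤ k) (hkN : k ≤ N)
    {aL cL aR cR : ℝ}
    (hL : ∀ y ∈ piece N x (k-1), f y = aL * y + cL)
    (hR : ∀ y ∈ piece N x k, f y = aR * y + cR) : aR < aL := by
  have hmono := hf.1.1.1
  have hkink := hf.2 k hk1 hkN
  have hr : rDeriv f (x k) = aR := by
    by_cases hkN' : N ≤ k
    · have hk0 : ¬ k = 0 := by omega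
      have he : piece N x k = Set.Ici (x N) := by simp [piece, hk0, hkN']
      have hkn : k = N := by omega
      refine rderiv_eq' f aR cR (x k) (x k + 1) (by linarith) (fun y hy => ?_)
      refine hR y ?_
      rw [he]; rw [hkn] at hy; exact hy.1
    · have hk0 : ¬ k = 0 := by omega
      have he : piece N x k = Set.Icc (x k) (x (k+1)) := by
        simp [piece, hk0, hkN']
      refine rderiv_eq' f aR cR (x k) (x (k+1)) (hmono k hk1 (by omega)) (fun y hy => ?_)
      exact hR y (by rw [he]; exact ⟨hy.1, hy.2.le⟩)
  have hl : lDeriv f (x k) = aL := by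
    by_cases hk1' : k = 1
    · have he : piece N x (k-1) = Set.Iic (x 1) := by simp [piece, hk1']
      refine lderiv_eq' f aL cL (x k) (x k - 1) (by linarith) (fun y hy => ?_)
      refine hL y ?_
      rw [he]; rw [hk1'] at hy; exact hy.2
    · have ha : ¬ k - 1 = 0 := by omega
      have hb : ¬ N ≤ k - 1 := by omega
      have he : piece N x (k-1) = Set.Icc (x (k-1)) (x ((k-1)+1)) := by
        simp [piece, ha, hb]
      have hk' : (k-1)+1 = k := by omega
      have hlt : x (k-1) < x k := by
        have := hmono (k-1) (by omega) (by omega)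
        rwa [hk'] at this
      refine lderiv_eq' f aL cL (x k) (x (k-1)) hlt (fun y hy => ?_)
      exact hL y (by rw [he, hk']; exact ⟨hy.1.le, hy.2⟩)
  rw [hr, hl] at hkink; exact hkink

lemma isClosed_imp_of {X : Type*} [TopologicalSpace X] (P : Prop) {Q : X → Prop}
    (h : IsClosed {x | Q x}) : IsClosed {x | P → Q x} := by
  by_cases hP : P
  · simpa [hP] using h
  · have : {x : X | P → Q x} = Set.univ := by ext z; simp [hP]
    rw [this]; exact isClosed_univ

lemma isOpen_imp_of {X : Type*} [TopologicalSpace X] (P : Prop) {Q : X → Prop}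
    (h : IsOpen {x | Q x}) : IsOpen {x | P → Q x} := by
  by_cases hP : P
  · simpa [hP] using h
  · have : {x : X | P → Q x} = Set.univ := by ext z; simp [hP]
    rw [this]; exact isOpen_univ

lemma classH_bdd {f : ℝ → ℝ} (hconc : ConcaveOn ℝ Set.univ f)
    {xb : ℝ} (hxb : ∀ y, xb ≤ y → f y = f xb) : ∀ y, f y ≤ f xb := by
  intro y
  rcases le_or_gt xb y with h | h
  · exact (hxb y h).le
  · have hz : xb ≤ 2 * xb - y := by linarith
    have hc := hconc.2 (Set.mem_univ y) (Set.mem_univ (2 * xb - y))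
      (by norm_num : (0:ℝ) ≤ 1/2) (by norm_num : (0:ℝ) ≤ 1/2) (by norm_num)
    simp only [smul_eq_mul] at hc
    have he : (1/2 : ℝ) * y + (1/2 : ℝ) * (2 * xb - y) = xb := by ring
    rw [he] at hc
    rw [hxb _ hz] at hc
    linarith

lemma Hfun_concave (R u d p : ℝ) (hR : 0 < R) (hp0 : 0 < p) (hp1 : p < 1)
    (f g : ℝ → ℝ) (hf : ConcaveOn ℝ Set.univ f) (hg : ConcaveOn ℝ Set.univ g) (w : ℝ) :
    ConcaveOn ℝ Set.univ (fun b => Hfun R u d p f g w b) := by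
  refine ⟨convex_univ, ?_⟩
  intro b1 _ b2 _ a b' ha hb hab
  simp only [smul_eq_mul, Hfun]
  have e1 : w * R + (a * b1 + b' * b2) * (u - R)
      = a * (w * R + b1 * (u - R)) + b' * (w * R + b2 * (u - R)) := by
    linear_combination (w * R) * hab.symm
  have e2 : w * R + (a * b1 + b' * b2) * (d - R)
      = a * (w * R + b1 * (d - R)) + b' * (w * R + b2 * (d - R)) := by
    linear_combination (w * R) * hab.symm
  rw [e1, e2]
  have h1 := hf.2 (Set.mem_univ (w * R + b1 * (u - R))) (Set.mem_univ (w * R + b2 * (u - R))) ha hb hab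
  have h2 := hg.2 (Set.mem_univ (w * R + b1 * (d - R))) (Set.mem_univ (w * R + b2 * (d - R))) ha hb hab
  simp only [smul_eq_mul] at h1 h2
  have hRi : (0:ℝ) ≤ R⁻¹ := inv_nonneg.mpr hR.le
  have key : a * (p * f (w * R + b1 * (u - R)) + (1 - p) * g (w * R + b1 * (d - R)))
      + b' * (p * f (w * R + b2 * (u - R)) + (1 - p) * g (w * R + b2 * (d - R)))
      ≤ p * f (a * (w * R + b1 * (u - R)) + b' * (w * R + b2 * (u - R)))
      + (1 - p) * g (a * (w * R + b1 * (d - R)) + b' * (w * R + b2 * (d - R))) := by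
    nlinarith [mul_le_mul_of_nonneg_left h1 hp0.le,
      mul_le_mul_of_nonneg_left h2 (by linarith : (0:ℝ) ≤ 1 - p)]
  nlinarith [mul_le_mul_of_nonneg_left key hRi]

lemma Hfun_global_le (R u d p : ℝ) (hR : 0 < R) (hp0 : 0 < p) (hp1 : p < 1)
    (f g : ℝ → ℝ) (Mf Mg : ℝ) (hfb : ∀ y, f y ≤ Mf) (hgb : ∀ y, g y ≤ Mg)
    (w b : ℝ) (hmax : Hfun R u d p f g w b = Vfun R u d p f g w) :
    ∀ b', Hfun R u d p f g w b' ≤ Hfun R u d p f g w b := by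
  intro b'
  rw [hmax, Vfun]
  refine le_ciSup ⟨R⁻¹ * (p * Mf + (1 - p) * Mg), ?_⟩ b'
  rintro _ ⟨b'', rfl⟩
  refine mul_le_mul_of_nonneg_left ?_ (inv_nonneg.mpr hR.le)
  exact add_le_add (mul_le_mul_of_nonneg_left (hfb _) hp0.le)
    (mul_le_mul_of_nonneg_left (hgb _) (by linarith))

lemma concave_chain {φ : ℝ → ℝ} (hφ : ConcaveOn ℝ Set.univ φ) {x1 x3 t : ℝ}
    (ht0 : 0 < t) (ht1 : t ≤ 1) (hv : φ ((1 - t) * x1 + t * x3) < φ x1) : φ x3 < φ x1 := by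
  have h := hφ.2 (Set.mem_univ x1) (Set.mem_univ x3) (by linarith : (0:ℝ) ≤ 1 - t) ht0.le (by ring)
  simp only [smul_eq_mul] at h
  nlinarith

lemma mem_closure_Dset (R u d : ℝ) (Nu Nd : ℕ) (xu xd : ℕ → ℝ) (i j : ℕ)
    (w b b₂ : ℝ) (hb : (w, b) ∈ Dset R u d Nu xu Nd xd i j)
    (h1 : 1 ≤ i → xu i ≤ w*R + b₂*(u-R)) (h2 : i < Nu → w*R + b₂*(u-R) ≤ xu (i+1))
    (h3 : 1 ≤ j → xd j ≤ w*R + b₂*(d-R)) (h4 : j < Nd → w*R + b₂*(d-R) ≤ xd (j+1)) :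
    (w, b₂) ∈ closure (Dset R u d Nu xu Nd xd i j) := by
  simp only [Dset, Set.mem_setOf_eq] at hb
  obtain ⟨hb1, hb2, hb3, hb4⟩ := hb
  have ht0 : ∀ n : ℕ, (0:ℝ) ≤ (n:ℝ)/((n:ℝ)+1) := fun n => div_nonneg (Nat.cast_nonneg n) (by positivity)
  have ht1 : ∀ n : ℕ, (n:ℝ)/((n:ℝ)+1) < 1 := fun n => (div_lt_one (by positivity)).mpr (by linarith)
  have hlim0 : Filter.Tendsto (fun n : ℕ => b + ((n:ℝ)/((n:ℝ)+1)) * (b₂ - b))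
      Filter.atTop (nhds (b + 1 * (b₂ - b))) :=
    Filter.Tendsto.const_add b ((tendsto_natCast_div_add_atTop (1:ℝ)).mul_const (b₂ - b))
  have hb2e : b + 1 * (b₂ - b) = b₂ := by ring
  rw [hb2e] at hlim0
  have hlim : Filter.Tendsto (fun n : ℕ => ((w, b + ((n:ℝ)/((n:ℝ)+1)) * (b₂ - b)) : ℝ × ℝ))
      Filter.atTop (nhds ((w, b₂) : ℝ × ℝ)) := by
    rw [nhds_prod_eq]
    exact Filter.Tendsto.prodMk tendsto_const_nhds hlim0
  refine mem_closure_of_tendsto hlim (Filter.Eventually.of_forall (fun n => ?_))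
  · set t := (n:ℝ)/((n:ℝ)+1) with hts
    simp only [Dset, Set.mem_setOf_eq]
    refine ⟨fun h => ?_, fun h => ?_, fun h => ?_, fun h => ?_⟩
    · have e : w*R + (b + t*(b₂-b))*(u-R) = (1-t)*(w*R + b*(u-R)) + t*(w*R + b₂*(u-R)) := by ring
      rw [e]
      nlinarith [mul_nonneg (ht0 n) (sub_nonneg.mpr (h1 h)),
        mul_pos (sub_pos.mpr (ht1 n)) (sub_pos.mpr (hb1 h))]
    · have e : w*R + (b + t*(b₂-b))*(u-R) = (1-t)*(w*R + b*(u-R)) + t*(w*R + b₂*(u-R)) := by ring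
      rw [e]
      nlinarith [mul_nonneg (ht0 n) (sub_nonneg.mpr (h2 h)),
        mul_pos (sub_pos.mpr (ht1 n)) (sub_pos.mpr (hb2 h))]
    · have e : w*R + (b + t*(b₂-b))*(d-R) = (1-t)*(w*R + b*(d-R)) + t*(w*R + b₂*(d-R)) := by ring
      rw [e]
      nlinarith [mul_nonneg (ht0 n) (sub_nonneg.mpr (h3 h)),
        mul_pos (sub_pos.mpr (ht1 n)) (sub_pos.mpr (hb3 h))]
    · have e : w*R + (b + t*(b₂-b))*(d-R) = (1-t)*(w*R + b*(d-R)) + t*(w*R + b₂*(d-R)) := by ring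
      rw [e]
      nlinarith [mul_nonneg (ht0 n) (sub_nonneg.mpr (h4 h)),
        mul_pos (sub_pos.mpr (ht1 n)) (sub_pos.mpr (hb4 h))]

lemma lt_of_arg_lt_pos {e b1 b2 W : ℝ} (he : 0 < e) (h : W + b1*e < W + b2*e) : b1 < b2 := by
  have h2 : b1 * e < b2 * e := by linarith
  exact lt_of_mul_lt_mul_right h2 he.le

lemma lt_of_arg_lt_neg {e b1 b2 W : ℝ} (he : e < 0) (h : W + b1*e < W + b2*e) : b2 < b1 := by
  have h2 : b2 * (-e) < b1 * (-e) := by nlinarith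
  exact lt_of_mul_lt_mul_right h2 (by linarith)

lemma arg_lt_of_lt_pos {e b1 b2 W : ℝ} (he : 0 < e) (h : b1 < b2) : W + b1*e < W + b2*e := by
  have := mul_lt_mul_of_pos_right h he
  linarith

lemma arg_lt_of_lt_neg {e b1 b2 W : ℝ} (he : e < 0) (h : b1 < b2) : W + b2*e < W + b1*e := by
  have := mul_lt_mul_of_neg_right h he
  linarith

lemma cross_up (R u d p : ℝ) (hR : 0 < R) (heu : 0 < u - R) (hed : d - R < 0)
    (hp0 : 0 < p) (hp1 : p < 1) (f g : ℝ → ℝ) (Nu Nd : ℕ) (xu xd : ℕ → ℝ)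
    (hf : HasSingVals f Nu xu) (hg : HasSingVals g Nd xd) (hNu : 1 ≤ Nu) (hNd : 1 ≤ Nd)
    (w : ℝ) (i j : ℕ) (hi : i ≤ Nu) (hj : j ≤ Nd)
    (af cf ag cg : ℝ)
    (haf : ∀ y ∈ piece Nu xu i, f y = af * y + cf)
    (hag : ∀ y ∈ piece Nd xd j, g y = ag * y + cg)
    (hA : p * af * (u - R) + (1 - p) * ag * (d - R) = 0)
    (m b₂ : ℝ) (hmb : m < b₂)
    (hc1 : 1 ≤ i → xu i < w * R + m * (u - R))
    (hc2 : i < Nu → w * R + m * (u - R) ≤ xu (i + 1))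
    (hc3 : 1 ≤ j → xd j ≤ w * R + m * (d - R))
    (hc4 : j < Nd → w * R + m * (d - R) < xd (j + 1))
    (hbind : (i < Nu ∧ w * R + m * (u - R) = xu (i + 1)) ∨
      (1 ≤ j ∧ w * R + m * (d - R) = xd j)) :
    Hfun R u d p f g w b₂ < Hfun R u d p f g w m := by
  have hU : ∃ af' cf' εu : ℝ, 0 < εu ∧
      (∀ ε', 0 ≤ ε' → ε' ≤ εu → f (w*R + (m+ε')*(u-R)) = af' * (w*R + (m+ε')*(u-R)) + cf') ∧
      af' ≤ af ∧ ((i < Nu ∧ w*R + m*(u-R) = xu (i+1)) → af' < af) := by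
    by_cases hbu : i < Nu ∧ w*R + m*(u-R) = xu (i+1)
    · obtain ⟨hiNu, heq⟩ := hbu
      obtain ⟨af', cf', haf'⟩ := piece_aff hf.1.1 hNu (show i+1 ≤ Nu by omega)
      have hLp : ∀ y ∈ piece Nu xu ((i+1)-1), f y = af * y + cf := by
        simpa using haf
      have hlt : af' < af := slope_lt hf hNu (by omega) (by omega) hLp haf'
      refine ⟨af', cf', if i+1 < Nu then (xu (i+1+1) - xu (i+1))/(u-R) else 1, ?_, ?_, hlt.le,
        fun _ => hlt⟩
      · by_cases h2 : i+1 < Nu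
        · rw [if_pos h2]
          have := hf.1.1.1 (i+1) (by omega) (by omega)
          exact div_pos (by linarith) heu
        · rw [if_neg h2]; norm_num
      · intro ε' h0 hle
        refine haf' _ (mem_piece hNu (by omega) ?_ ?_)
        · intro _
          linarith [mul_nonneg h0 heu.le]
        · intro hi2
          rw [if_pos hi2] at hle
          have hmul : ε' * (u-R) ≤ xu (i+1+1) - xu (i+1) := (le_div_iff₀ heu).mp hle
          linarith [hmul]
    · have hsl : i < Nu → w*R + m*(u-R) < xu (i+1) :=
        fun h2 => lt_of_le_of_ne (hc2 h2) (fun he => hbu ⟨h2, he⟩)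
      refine ⟨af, cf, if i < Nu then (xu (i+1) - (w*R + m*(u-R)))/(u-R) else 1, ?_, ?_,
        le_refl af, fun hb => absurd hb hbu⟩
      · by_cases h2 : i < Nu
        · rw [if_pos h2]; exact div_pos (by linarith [hsl h2]) heu
        · rw [if_neg h2]; norm_num
      · intro ε' h0 hle
        refine haf _ (mem_piece hNu hi ?_ ?_)
        · intro h1
          have := hc1 h1
          linarith [mul_nonneg h0 heu.le]
        · intro h2
          rw [if_pos h2] at hle
          have hmul : ε' * (u-R) ≤ xu (i+1) - (w*R + m*(u-R)) := (le_div_iff₀ heu).mp hle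
          linarith [hmul]
  have hD : ∃ ag' cg' εd : ℝ, 0 < εd ∧
      (∀ ε', 0 ≤ ε' → ε' ≤ εd → g (w*R + (m+ε')*(d-R)) = ag' * (w*R + (m+ε')*(d-R)) + cg') ∧
      ag ≤ ag' ∧ ((1 ≤ j ∧ w*R + m*(d-R) = xd j) → ag < ag') := by
    by_cases hbd : 1 ≤ j ∧ w*R + m*(d-R) = xd j
    · obtain ⟨hj1, heq⟩ := hbd
      obtain ⟨ag', cg', hag'⟩ := piece_aff hg.1.1 hNd (show j-1 ≤ Nd by omega)
      have hlt : ag < ag' := slope_lt hg hNd hj1 hj hag' hag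
      refine ⟨ag', cg', if 2 ≤ j then (xd j - xd (j-1))/(-(d-R)) else 1, ?_, ?_, hlt.le,
        fun _ => hlt⟩
      · by_cases h2 : 2 ≤ j
        · rw [if_pos h2]
          have hxx : xd (j-1) < xd j := by
            have := hg.1.1.1 (j-1) (by omega) (by omega)
            rwa [(by omega : j-1+1 = j)] at this
          exact div_pos (by linarith) (by linarith)
        · rw [if_neg h2]; norm_num
      · intro ε' h0 hle
        refine hag' _ (mem_piece hNd (by omega) ?_ ?_)
        · intro h1
          rw [if_pos (by omega : 2 ≤ j)] at hle
          have hmul : ε' * (-(d-R)) ≤ xd j - xd (j-1) :=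
            (le_div_iff₀ (by linarith : (0:ℝ) < -(d-R))).mp hle
          linarith [hmul]
        · intro h2
          rw [(by omega : j-1+1 = j)]
          linarith [mul_nonneg h0 (neg_nonneg.mpr hed.le)]
    · have hsl : 1 ≤ j → xd j < w*R + m*(d-R) :=
        fun h1 => lt_of_le_of_ne (hc3 h1) (fun he => hbd ⟨h1, he.symm⟩)
      refine ⟨ag, cg, if 1 ≤ j then ((w*R + m*(d-R)) - xd j)/(-(d-R)) else 1, ?_, ?_,
        le_refl ag, fun hb => absurd hb hbd⟩
      · by_cases h1 : 1 ≤ j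
        · rw [if_pos h1]; exact div_pos (by linarith [hsl h1]) (by linarith)
        · rw [if_neg h1]; norm_num
      · intro ε' h0 hle
        refine hag _ (mem_piece hNd hj ?_ ?_)
        · intro h1
          rw [if_pos h1] at hle
          have hmul : ε' * (-(d-R)) ≤ (w*R + m*(d-R)) - xd j :=
            (le_div_iff₀ (by linarith : (0:ℝ) < -(d-R))).mp hle
          linarith [hmul]
        · intro h4
          have := hc4 h4
          linarith [mul_nonneg h0 (neg_nonneg.mpr hed.le)]
  obtain ⟨af', cf', εu, hεu, hfv, hafle, hafstrict⟩ := hU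
  obtain ⟨ag', cg', εd, hεd, hgv, hagle, hagstrict⟩ := hD
  have hA' : p * af' * (u - R) + (1 - p) * ag' * (d - R) < 0 := by
    rcases hbind with hb1 | hb2
    · have h1 : af' < af := hafstrict hb1
      linarith [mul_pos (mul_pos hp0 heu) (sub_pos.mpr h1),
        mul_nonneg (mul_nonneg (by linarith : (0:ℝ) ≤ 1-p) (sub_nonneg.mpr hagle))
          (neg_nonneg.mpr hed.le)]
    · have h2 : ag < ag' := hagstrict hb2
      linarith [mul_pos (mul_pos (by linarith : (0:ℝ) < 1-p) (neg_pos.mpr hed))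
          (sub_pos.mpr h2),
        mul_nonneg (mul_nonneg hp0.le (sub_nonneg.mpr hafle)) heu.le]
  set ε := min (min εu εd) (b₂ - m) with hεdef
  have hε0 : 0 < ε := lt_min (lt_min hεu hεd) (by linarith)
  have hεu' : ε ≤ εu := le_trans (min_le_left _ _) (min_le_left _ _)
  have hεd' : ε ≤ εd := le_trans (min_le_left _ _) (min_le_right _ _)
  have hεb : ε ≤ b₂ - m := min_le_right _ _
  have hφm : Hfun R u d p f g w m
      = R⁻¹ * (p * (af' * (w*R + m*(u-R)) + cf') + (1-p) * (ag' * (w*R + m*(d-R)) + cg')) := by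
    have h1 := hfv 0 le_rfl hεu.le
    have h2 := hgv 0 le_rfl hεd.le
    simp only [add_zero] at h1 h2
    rw [Hfun, h1, h2]
  have hφmε : Hfun R u d p f g w (m + ε)
      = R⁻¹ * (p * (af' * (w*R + (m+ε)*(u-R)) + cf')
        + (1-p) * (ag' * (w*R + (m+ε)*(d-R)) + cg')) := by
    rw [Hfun, hfv ε hε0.le hεu', hgv ε hε0.le hεd']
  have hlt : Hfun R u d p f g w (m + ε) < Hfun R u d p f g w m := by
    have hRi : 0 < R⁻¹ := inv_pos.mpr hR
    have hdiff : Hfun R u d p f g w (m + ε) - Hfun R u d p f g w m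
        = (R⁻¹ * ε) * (p * af' * (u - R) + (1 - p) * ag' * (d - R)) := by
      rw [hφm, hφmε]; ring
    have hneg : (R⁻¹ * ε) * (p * af' * (u - R) + (1 - p) * ag' * (d - R)) < 0 :=
      mul_neg_of_pos_of_neg (mul_pos hRi hε0) hA'
    linarith
  have hconc := Hfun_concave R u d p hR hp0 hp1 f g hf.1.2.1 hg.1.2.1 w
  have hden : 0 < b₂ - m := by linarith
  have ht0 : 0 < ε / (b₂ - m) := div_pos hε0 hden
  have ht1 : ε / (b₂ - m) ≤ 1 := (div_le_one hden).mpr hεb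
  refine concave_chain hconc ht0 ht1 ?_
  have hcomb : (1 - ε/(b₂-m)) * m + (ε/(b₂-m)) * b₂ = m + ε := by
    field_simp
    ring
  rw [hcomb]
  exact hlt

lemma cross_down (R u d p : ℝ) (hR : 0 < R) (heu : 0 < u - R) (hed : d - R < 0)
    (hp0 : 0 < p) (hp1 : p < 1) (f g : ℝ → ℝ) (Nu Nd : ℕ) (xu xd : ℕ → ℝ)
    (hf : HasSingVals f Nu xu) (hg : HasSingVals g Nd xd) (hNu : 1 ≤ Nu) (hNd : 1 ≤ Nd)
    (w : ℝ) (i j : ℕ) (hi : i ≤ Nu) (hj : j ≤ Nd)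
    (af cf ag cg : ℝ)
    (haf : ∀ y ∈ piece Nu xu i, f y = af * y + cf)
    (hag : ∀ y ∈ piece Nd xd j, g y = ag * y + cg)
    (hA : p * af * (u - R) + (1 - p) * ag * (d - R) = 0)
    (m b₂ : ℝ) (hmb : b₂ < m)
    (hc1 : 1 ≤ i → xu i ≤ w * R + m * (u - R))
    (hc2 : i < Nu → w * R + m * (u - R) < xu (i + 1))
    (hc3 : 1 ≤ j → xd j < w * R + m * (d - R))
    (hc4 : j < Nd → w * R + m * (d - R) ≤ xd (j + 1))
    (hbind : (1 ≤ i ∧ w * R + m * (u - R) = xu i) ∨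
      (j < Nd ∧ w * R + m * (d - R) = xd (j + 1))) :
    Hfun R u d p f g w b₂ < Hfun R u d p f g w m := by
  have hU : ∃ af' cf' εu : ℝ, 0 < εu ∧
      (∀ ε', 0 ≤ ε' → ε' ≤ εu → f (w*R + (m-ε')*(u-R)) = af' * (w*R + (m-ε')*(u-R)) + cf') ∧
      af ≤ af' ∧ ((1 ≤ i ∧ w*R + m*(u-R) = xu i) → af < af') := by
    by_cases hbu : 1 ≤ i ∧ w*R + m*(u-R) = xu i
    · obtain ⟨hi1, heq⟩ := hbu
      obtain ⟨af', cf', haf'⟩ := piece_aff hf.1.1 hNu (show i-1 ≤ Nu by omega)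
      have hlt : af < af' := slope_lt hf hNu hi1 hi haf' haf
      refine ⟨af', cf', if 2 ≤ i then (xu i - xu (i-1))/(u-R) else 1, ?_, ?_, hlt.le,
        fun _ => hlt⟩
      · by_cases h2 : 2 ≤ i
        · rw [if_pos h2]
          have hxx : xu (i-1) < xu i := by
            have := hf.1.1.1 (i-1) (by omega) (by omega)
            rwa [(by omega : i-1+1 = i)] at this
          exact div_pos (by linarith) heu
        · rw [if_neg h2]; norm_num
      · intro ε' h0 hle
        refine haf' _ (mem_piece hNu (by omega) ?_ ?_)
        · intro h1
          rw [if_pos (by omega : 2 ≤ i)] at hle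
          have hmul : ε' * (u-R) ≤ xu i - xu (i-1) := (le_div_iff₀ heu).mp hle
          linarith [hmul]
        · intro h2
          rw [(by omega : i-1+1 = i)]
          linarith [mul_nonneg h0 heu.le]
    · have hsl : 1 ≤ i → xu i < w*R + m*(u-R) :=
        fun h1 => lt_of_le_of_ne (hc1 h1) (fun he => hbu ⟨h1, he.symm⟩)
      refine ⟨af, cf, if 1 ≤ i then ((w*R + m*(u-R)) - xu i)/(u-R) else 1, ?_, ?_,
        le_refl af, fun hb => absurd hb hbu⟩
      · by_cases h1 : 1 ≤ i
        · rw [if_pos h1]; exact div_pos (by linarith [hsl h1]) heu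
        · rw [if_neg h1]; norm_num
      · intro ε' h0 hle
        refine haf _ (mem_piece hNu hi ?_ ?_)
        · intro h1
          rw [if_pos h1] at hle
          have hmul : ε' * (u-R) ≤ (w*R + m*(u-R)) - xu i := (le_div_iff₀ heu).mp hle
          linarith [hmul]
        · intro h2
          have := hc2 h2
          linarith [mul_nonneg h0 heu.le]
  have hD : ∃ ag' cg' εd : ℝ, 0 < εd ∧
      (∀ ε', 0 ≤ ε' → ε' ≤ εd → g (w*R + (m-ε')*(d-R)) = ag' * (w*R + (m-ε')*(d-R)) + cg') ∧
      ag' ≤ ag ∧ ((j < Nd ∧ w*R + m*(d-R) = xd (j+1)) → ag' < ag) := by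
    by_cases hbd : j < Nd ∧ w*R + m*(d-R) = xd (j+1)
    · obtain ⟨hjNd, heq⟩ := hbd
      obtain ⟨ag', cg', hag'⟩ := piece_aff hg.1.1 hNd (show j+1 ≤ Nd by omega)
      have hLp : ∀ y ∈ piece Nd xd ((j+1)-1), g y = ag * y + cg := by
        simpa using hag
      have hlt : ag' < ag := slope_lt hg hNd (by omega) (by omega) hLp hag'
      refine ⟨ag', cg', if j+1 < Nd then (xd (j+1+1) - xd (j+1))/(-(d-R)) else 1, ?_, ?_,
        hlt.le, fun _ => hlt⟩
      · by_cases h2 : j+1 < Nd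
        · rw [if_pos h2]
          have := hg.1.1.1 (j+1) (by omega) (by omega)
          exact div_pos (by linarith) (by linarith)
        · rw [if_neg h2]; norm_num
      · intro ε' h0 hle
        refine hag' _ (mem_piece hNd (by omega) ?_ ?_)
        · intro _
          linarith [mul_nonneg h0 (neg_nonneg.mpr hed.le)]
        · intro hj2
          rw [if_pos hj2] at hle
          have hmul : ε' * (-(d-R)) ≤ xd (j+1+1) - xd (j+1) :=
            (le_div_iff₀ (by linarith : (0:ℝ) < -(d-R))).mp hle
          linarith [hmul]
    · have hsl : j < Nd → w*R + m*(d-R) < xd (j+1) :=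
        fun h2 => lt_of_le_of_ne (hc4 h2) (fun he => hbd ⟨h2, he⟩)
      refine ⟨ag, cg, if j < Nd then (xd (j+1) - (w*R + m*(d-R)))/(-(d-R)) else 1, ?_, ?_,
        le_refl ag, fun hb => absurd hb hbd⟩
      · by_cases h2 : j < Nd
        · rw [if_pos h2]; exact div_pos (by linarith [hsl h2]) (by linarith)
        · rw [if_neg h2]; norm_num
      · intro ε' h0 hle
        refine hag _ (mem_piece hNd hj ?_ ?_)
        · intro h1
          have := hc3 h1
          linarith [mul_nonneg h0 (neg_nonneg.mpr hed.le)]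
        · intro h2
          rw [if_pos h2] at hle
          have hmul : ε' * (-(d-R)) ≤ xd (j+1) - (w*R + m*(d-R)) :=
            (le_div_iff₀ (by linarith : (0:ℝ) < -(d-R))).mp hle
          linarith [hmul]
  obtain ⟨af', cf', εu, hεu, hfv, hafle, hafstrict⟩ := hU
  obtain ⟨ag', cg', εd, hεd, hgv, hagle, hagstrict⟩ := hD
  have hA' : 0 < p * af' * (u - R) + (1 - p) * ag' * (d - R) := by
    rcases hbind with hb1 | hb2
    · have h1 : af < af' := hafstrict hb1
      linarith [mul_pos (mul_pos hp0 heu) (sub_pos.mpr h1),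
        mul_nonneg (mul_nonneg (by linarith : (0:ℝ) ≤ 1-p) (sub_nonneg.mpr hagle))
          (neg_nonneg.mpr hed.le)]
    · have h2 : ag' < ag := hagstrict hb2
      linarith [mul_pos (mul_pos (by linarith : (0:ℝ) < 1-p) (neg_pos.mpr hed))
          (sub_pos.mpr h2),
        mul_nonneg (mul_nonneg hp0.le (sub_nonneg.mpr hafle)) heu.le]
  set ε := min (min εu εd) (m - b₂) with hεdef
  have hε0 : 0 < ε := lt_min (lt_min hεu hεd) (by linarith)
  have hεu' : ε ≤ εu := le_trans (min_le_left _ _) (min_le_left _ _)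
  have hεd' : ε ≤ εd := le_trans (min_le_left _ _) (min_le_right _ _)
  have hεb : ε ≤ m - b₂ := min_le_right _ _
  have hφm : Hfun R u d p f g w m
      = R⁻¹ * (p * (af' * (w*R + m*(u-R)) + cf') + (1-p) * (ag' * (w*R + m*(d-R)) + cg')) := by
    have h1 := hfv 0 le_rfl hεu.le
    have h2 := hgv 0 le_rfl hεd.le
    simp only [sub_zero] at h1 h2
    rw [Hfun, h1, h2]
  have hφmε : Hfun R u d p f g w (m - ε)
      = R⁻¹ * (p * (af' * (w*R + (m-ε)*(u-R)) + cf')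
        + (1-p) * (ag' * (w*R + (m-ε)*(d-R)) + cg')) := by
    rw [Hfun, hfv ε hε0.le hεu', hgv ε hε0.le hεd']
  have hlt : Hfun R u d p f g w (m - ε) < Hfun R u d p f g w m := by
    have hRi : 0 < R⁻¹ := inv_pos.mpr hR
    have hdiff : Hfun R u d p f g w (m - ε) - Hfun R u d p f g w m
        = -((R⁻¹ * ε) * (p * af' * (u - R) + (1 - p) * ag' * (d - R))) := by
      rw [hφm, hφmε]; ring
    have hneg : 0 < (R⁻¹ * ε) * (p * af' * (u - R) + (1 - p) * ag' * (d - R)) :=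
      mul_pos (mul_pos hRi hε0) hA'
    linarith
  have hconc := Hfun_concave R u d p hR hp0 hp1 f g hf.1.2.1 hg.1.2.1 w
  have hden : 0 < m - b₂ := by linarith
  have ht0 : 0 < ε / (m - b₂) := div_pos hε0 hden
  have ht1 : ε / (m - b₂) ≤ 1 := (div_le_one hden).mpr hεb
  refine concave_chain hconc ht0 ht1 ?_
  have hcomb : (1 - ε/(m-b₂)) * m + (ε/(m-b₂)) * b₂ = m - ε := by
    field_simp
    ring
  rw [hcomb]
  exact hlt

/-- If `b` is a maximizer of `b' ↦ H(w,b')` and `(w,b)` lies in the open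
parallelogram `D_ij`, then `H(w,·)` is constant on the `w`-section of the closure of
`D_ij` and strictly smaller outside of it. -/
theorem stmt_7 (R u d p : ℝ) (hd : 0 < d) (hdR : d < R) (hRu : R < u)
    (hp0 : 0 < p) (hp1 : p < 1)
    (f g : ℝ → ℝ) (Nu Nd : ℕ) (xu xd : ℕ → ℝ)
    (hf : HasSingVals f Nu xu) (hg : HasSingVals g Nd xd)
    (hNu : 1 ≤ Nu) (hNd : 1 ≤ Nd)
    (hfnc : ∃ a b : ℝ, f a ≠ f b) (hgnc : ∃ a b : ℝ, g a ≠ g b)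
    (w b : ℝ) (i j : ℕ) (hi : i ≤ Nu) (hj : j ≤ Nd)
    (hmax : Hfun R u d p f g w b = Vfun R u d p f g w)
    (hmem : (w, b) ∈ Dset R u d Nu xu Nd xd i j) :
    (∀ b₁ : ℝ, (w, b₁) ∈ closure (Dset R u d Nu xu Nd xd i j) →
      Hfun R u d p f g w b₁ = Hfun R u d p f g w b) ∧
    (∀ b₂ : ℝ, (w, b₂) ∉ closure (Dset R u d Nu xu Nd xd i j) →
      Hfun R u d p f g w b₂ < Hfun R u d p f g w b) := by
  have hR : 0 < R := hd.trans hdR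
  have heu : 0 < u - R := by linarith
  have hed : d - R < 0 := by linarith
  have hRi : 0 < R⁻¹ := inv_pos.mpr hR
  simp only [Dset, Set.mem_setOf_eq] at hmem
  obtain ⟨hm1, hm2, hm3, hm4⟩ := hmem
  obtain ⟨af, cf, haf⟩ := piece_aff hf.1.1 hNu hi
  obtain ⟨ag, cg, hag⟩ := piece_aff hg.1.1 hNd hj
  have hval : ∀ b' : ℝ, (1 ≤ i → xu i ≤ w*R + b'*(u-R)) → (i < Nu → w*R + b'*(u-R) ≤ xu (i+1)) →
      (1 ≤ j → xd j ≤ w*R + b'*(d-R)) → (j < Nd → w*R + b'*(d-R) ≤ xd (j+1)) →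
      Hfun R u d p f g w b'
        = R⁻¹ * (p*(af*(w*R + b'*(u-R)) + cf) + (1-p)*(ag*(w*R + b'*(d-R)) + cg)) := by
    intro b' h1 h2 h3 h4
    rw [Hfun, haf _ (mem_piece hNu hi h1 h2), hag _ (mem_piece hNd hj h3 h4)]
  obtain ⟨xbf, hxbf⟩ := hf.1.2.2
  obtain ⟨xbg, hxbg⟩ := hg.1.2.2
  have hub : ∀ b', Hfun R u d p f g w b' ≤ Hfun R u d p f g w b :=
    Hfun_global_le R u d p hR hp0 hp1 f g _ _ (classH_bdd hf.1.2.1 hxbf)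
      (classH_bdd hg.1.2.1 hxbg) w b hmax
  have hcontu : Continuous (fun pt : ℝ × ℝ => pt.1*R + pt.2*(u-R)) :=
    (continuous_fst.mul continuous_const).add (continuous_snd.mul continuous_const)
  have hcontd : Continuous (fun pt : ℝ × ℝ => pt.1*R + pt.2*(d-R)) :=
    (continuous_fst.mul continuous_const).add (continuous_snd.mul continuous_const)
  have hopenD : IsOpen (Dset R u d Nu xu Nd xd i j) := by
    simp only [Dset, Set.setOf_and]
    exact ((isOpen_imp_of _ (isOpen_lt continuous_const hcontu)).inter
      ((isOpen_imp_of _ (isOpen_lt hcontu continuous_const)).inter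
      ((isOpen_imp_of _ (isOpen_lt continuous_const hcontd)).inter
      (isOpen_imp_of _ (isOpen_lt hcontd continuous_const)))))
  have hmemD : (w, b) ∈ Dset R u d Nu xu Nd xd i j := ⟨hm1, hm2, hm3, hm4⟩
  have hA : p*af*(u-R) + (1-p)*ag*(d-R) = 0 := by
    have hpre : IsOpen ((fun t : ℝ => ((w, t) : ℝ × ℝ)) ⁻¹' Dset R u d Nu xu Nd xd i j) :=
      hopenD.preimage (continuous_const.prodMk continuous_id)
    obtain ⟨ε, hε, hsub⟩ := Metric.isOpen_iff.mp hpre b hmemD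
    have hmem1 : (w, b + ε/2) ∈ Dset R u d Nu xu Nd xd i j := by
      refine hsub ?_
      rw [Metric.mem_ball, Real.dist_eq, show b + ε/2 - b = ε/2 by ring,
        abs_of_pos (by linarith)]
      linarith
    have hmem2 : (w, b - ε/2) ∈ Dset R u d Nu xu Nd xd i j := by
      refine hsub ?_
      rw [Metric.mem_ball, Real.dist_eq, show b - ε/2 - b = -(ε/2) by ring,
        abs_of_nonpos (by linarith), neg_neg]
      linarith
    simp only [Dset, Set.mem_setOf_eq] at hmem1 hmem2
    have e1 := hval (b + ε/2) (fun h => (hmem1.1 h).le) (fun h => (hmem1.2.1 h).le)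
      (fun h => (hmem1.2.2.1 h).le) (fun h => (hmem1.2.2.2 h).le)
    have e2 := hval (b - ε/2) (fun h => (hmem2.1 h).le) (fun h => (hmem2.2.1 h).le)
      (fun h => (hmem2.2.2.1 h).le) (fun h => (hmem2.2.2.2 h).le)
    have e0 := hval b (fun h => (hm1 h).le) (fun h => (hm2 h).le) (fun h => (hm3 h).le)
      (fun h => (hm4 h).le)
    have i1 := hub (b + ε/2)
    have i2 := hub (b - ε/2)
    rw [e1, e0] at i1
    rw [e2, e0] at i2
    have k1 : (R⁻¹ * (ε/2)) * (p*af*(u-R) + (1-p)*ag*(d-R)) ≤ 0 := by linarith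
    have k2 : 0 ≤ (R⁻¹ * (ε/2)) * (p*af*(u-R) + (1-p)*ag*(d-R)) := by linarith
    have hpos : 0 < R⁻¹ * (ε/2) := mul_pos hRi (by linarith)
    have := le_antisymm k1 k2
    exact (mul_eq_zero.mp this).resolve_left (ne_of_gt hpos)
  have hvb := hval b (fun h => (hm1 h).le) (fun h => (hm2 h).le) (fun h => (hm3 h).le)
    (fun h => (hm4 h).le)
  constructor
  · intro b₁ hb₁
    have hclosedset : IsClosed {pt : ℝ × ℝ |
        (1 ≤ i → xu i ≤ pt.1*R + pt.2*(u-R)) ∧ ((i < Nu → pt.1*R + pt.2*(u-R) ≤ xu (i+1)) ∧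
        ((1 ≤ j → xd j ≤ pt.1*R + pt.2*(d-R)) ∧ (j < Nd → pt.1*R + pt.2*(d-R) ≤ xd (j+1))))} := by
      simp only [Set.setOf_and]
      exact ((isClosed_imp_of _ (isClosed_le continuous_const hcontu)).inter
        ((isClosed_imp_of _ (isClosed_le hcontu continuous_const)).inter
        ((isClosed_imp_of _ (isClosed_le continuous_const hcontd)).inter
        (isClosed_imp_of _ (isClosed_le hcontd continuous_const)))))
    have hsubset : Dset R u d Nu xu Nd xd i j ⊆ {pt : ℝ × ℝ |
        (1 ≤ i → xu i ≤ pt.1*R + pt.2*(u-R)) ∧ ((i < Nu → pt.1*R + pt.2*(u-R) ≤ xu (i+1)) ∧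
        ((1 ≤ j → xd j ≤ pt.1*R + pt.2*(d-R)) ∧ (j < Nd → pt.1*R + pt.2*(d-R) ≤ xd (j+1))))} := by
      intro pt hpt
      exact ⟨fun h => (hpt.1 h).le, fun h => (hpt.2.1 h).le, fun h => (hpt.2.2.1 h).le,
        fun h => (hpt.2.2.2 h).le⟩
    obtain ⟨g1, g2, g3, g4⟩ := closure_minimal hsubset hclosedset hb₁
    rw [hval b₁ g1 g2 g3 g4, hvb]
    linear_combination R⁻¹ * (b₁ - b) * hA
  · intro b₂ hb₂
    have hnot : ¬((1 ≤ i → xu i ≤ w*R + b₂*(u-R)) ∧ (i < Nu → w*R + b₂*(u-R) ≤ xu (i+1)) ∧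
        (1 ≤ j → xd j ≤ w*R + b₂*(d-R)) ∧ (j < Nd → w*R + b₂*(d-R) ≤ xd (j+1))) := by
      intro hcc
      exact hb₂ (mem_closure_Dset R u d Nu Nd xu xd i j w b b₂ hmemD hcc.1 hcc.2.1
        hcc.2.2.1 hcc.2.2.2)
    have hupper : ∀ m : ℝ, b < m → m < b₂ →
        (1 ≤ i → xu i < w*R + m*(u-R)) → (i < Nu → w*R + m*(u-R) ≤ xu (i+1)) →
        (1 ≤ j → xd j ≤ w*R + m*(d-R)) → (j < Nd → w*R + m*(d-R) < xd (j+1)) →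
        ((i < Nu ∧ w*R + m*(u-R) = xu (i+1)) ∨ (1 ≤ j ∧ w*R + m*(d-R) = xd j)) →
        Hfun R u d p f g w b₂ < Hfun R u d p f g w b := by
      intro m hbm hmb2 g1 g2 g3 g4 gb
      have h1 := cross_up R u d p hR heu hed hp0 hp1 f g Nu Nd xu xd hf hg hNu hNd w i j
        hi hj af cf ag cg haf hag hA m b₂ hmb2 g1 g2 g3 g4 gb
      have h2 : Hfun R u d p f g w m = Hfun R u d p f g w b := by
        rw [hval m (fun h => (g1 h).le) g2 g3 (fun h => (g4 h).le), hvb]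
        linear_combination R⁻¹ * (m - b) * hA
      linarith
    have hlower : ∀ m : ℝ, b₂ < m → m < b →
        (1 ≤ i → xu i ≤ w*R + m*(u-R)) → (i < Nu → w*R + m*(u-R) < xu (i+1)) →
        (1 ≤ j → xd j < w*R + m*(d-R)) → (j < Nd → w*R + m*(d-R) ≤ xd (j+1)) →
        ((1 ≤ i ∧ w*R + m*(u-R) = xu i) ∨ (j < Nd ∧ w*R + m*(d-R) = xd (j+1))) →
        Hfun R u d p f g w b₂ < Hfun R u d p f g w b := by
      intro m hb2m hmb g1 g2 g3 g4 gb
      have h1 := cross_down R u d p hR heu hed hp0 hp1 f g Nu Nd xu xd hf hg hNu hNd w i j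
        hi hj af cf ag cg haf hag hA m b₂ hb2m g1 g2 g3 g4 gb
      have h2 : Hfun R u d p f g w m = Hfun R u d p f g w b := by
        rw [hval m g1 (fun h => (g2 h).le) (fun h => (g3 h).le) g4, hvb]
        linear_combination R⁻¹ * (m - b) * hA
      linarith
    by_cases hC1 : 1 ≤ i → xu i ≤ w*R + b₂*(u-R)
    · by_cases hC2 : i < Nu → w*R + b₂*(u-R) ≤ xu (i+1)
      · by_cases hC3 : 1 ≤ j → xd j ≤ w*R + b₂*(d-R)
        · by_cases hC4 : j < Nd → w*R + b₂*(d-R) ≤ xd (j+1)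
          · exact absurd ⟨hC1, hC2, hC3, hC4⟩ hnot
          · -- C4 violated : lower type, d binds below
            push_neg at hC4
            obtain ⟨hjNd, hviol⟩ := hC4
            set lD := (xd (j+1) - w*R)/(d-R) with hlDdef
            have hlD : w*R + lD*(d-R) = xd (j+1) := by
              rw [hlDdef, div_mul_cancel₀ _ (ne_of_lt hed)]; ring
            have hblD : lD < b := lt_of_arg_lt_neg hed (by rw [hlD]; exact hm4 hjNd)
            have hb2lD : b₂ < lD := lt_of_arg_lt_neg hed
              (show w*R + lD*(d-R) < w*R + b₂*(d-R) by rw [hlD]; exact hviol)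
            by_cases hiu : 1 ≤ i ∧ w*R + lD*(u-R) < xu i
            · set lU := (xu i - w*R)/(u-R) with hlUdef
              have hlU : w*R + lU*(u-R) = xu i := by
                rw [hlUdef, div_mul_cancel₀ _ (ne_of_gt heu)]; ring
              have hlDlU : lD < lU := lt_of_arg_lt_pos heu (by rw [hlU]; exact hiu.2)
              have hlUb : lU < b := lt_of_arg_lt_pos heu (by rw [hlU]; exact hm1 hiu.1)
              refine hlower lU (lt_trans hb2lD hlDlU) hlUb (fun _ => hlU.ge) ?_ ?_ ?_
                (Or.inl ⟨hiu.1, hlU⟩)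
              · intro h2
                have := arg_lt_of_lt_pos (W := w*R) heu hlUb
                linarith [hm2 h2]
              · intro h1
                have := arg_lt_of_lt_neg (W := w*R) hed hlUb
                linarith [hm3 h1]
              · intro h4
                have := arg_lt_of_lt_neg (W := w*R) hed hlDlU
                linarith [hlD.le]
            · refine hlower lD hb2lD hblD ?_ ?_ ?_ (fun _ => hlD.le)
                (Or.inr ⟨hjNd, hlD⟩)
              · intro h1
                exact le_of_not_gt (fun hl => hiu ⟨h1, hl⟩)
              · intro h2
                have := arg_lt_of_lt_pos (W := w*R) heu hblD
                linarith [hm2 h2]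
              · intro h1
                have := arg_lt_of_lt_neg (W := w*R) hed hblD
                linarith [hm3 h1]
        · -- C3 violated : upper type, d binds above
          push_neg at hC3
          obtain ⟨hj1, hviol⟩ := hC3
          set mD := (xd j - w*R)/(d-R) with hmDdef
          have hmD : w*R + mD*(d-R) = xd j := by
            rw [hmDdef, div_mul_cancel₀ _ (ne_of_lt hed)]; ring
          have hbmD : b < mD := lt_of_arg_lt_neg hed
            (show w*R + mD*(d-R) < w*R + b*(d-R) by rw [hmD]; exact hm3 hj1)
          have hmDb2 : mD < b₂ := lt_of_arg_lt_neg hed (by rw [hmD]; exact hviol)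
          by_cases hiu : i < Nu ∧ xu (i+1) < w*R + mD*(u-R)
          · set mU := (xu (i+1) - w*R)/(u-R) with hmUdef
            have hmU : w*R + mU*(u-R) = xu (i+1) := by
              rw [hmUdef, div_mul_cancel₀ _ (ne_of_gt heu)]; ring
            have hmUmD : mU < mD := lt_of_arg_lt_pos heu (by rw [hmU]; exact hiu.2)
            have hbmU : b < mU := lt_of_arg_lt_pos heu
              (show w*R + b*(u-R) < w*R + mU*(u-R) by rw [hmU]; exact hm2 hiu.1)
            refine hupper mU hbmU (lt_trans hmUmD hmDb2) ?_ (fun _ => hmU.le) ?_ ?_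
              (Or.inl ⟨hiu.1, hmU⟩)
            · intro h1
              have := arg_lt_of_lt_pos (W := w*R) heu hbmU
              linarith [hm1 h1]
            · intro h1
              have := arg_lt_of_lt_neg (W := w*R) hed hmUmD
              linarith [hmD.ge]
            · intro h4
              have := arg_lt_of_lt_neg (W := w*R) hed hbmU
              linarith [hm4 h4]
          · refine hupper mD hbmD hmDb2 ?_ ?_ (fun _ => hmD.ge) ?_
              (Or.inr ⟨hj1, hmD⟩)
            · intro h1
              have := arg_lt_of_lt_pos (W := w*R) heu hbmD
              linarith [hm1 h1]
            · intro h2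
              exact le_of_not_gt (fun hl => hiu ⟨h2, hl⟩)
            · intro h4
              have := arg_lt_of_lt_neg (W := w*R) hed hbmD
              linarith [hm4 h4]
      · -- C2 violated : upper type, u binds above
        push_neg at hC2
        obtain ⟨hiNu, hviol⟩ := hC2
        set mU := (xu (i+1) - w*R)/(u-R) with hmUdef
        have hmU : w*R + mU*(u-R) = xu (i+1) := by
          rw [hmUdef, div_mul_cancel₀ _ (ne_of_gt heu)]; ring
        have hbmU : b < mU := lt_of_arg_lt_pos heu
          (show w*R + b*(u-R) < w*R + mU*(u-R) by rw [hmU]; exact hm2 hiNu)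
        have hmUb2 : mU < b₂ := lt_of_arg_lt_pos heu (by rw [hmU]; exact hviol)
        by_cases hjd : 1 ≤ j ∧ w*R + mU*(d-R) < xd j
        · set mD := (xd j - w*R)/(d-R) with hmDdef
          have hmD : w*R + mD*(d-R) = xd j := by
            rw [hmDdef, div_mul_cancel₀ _ (ne_of_lt hed)]; ring
          have hmDmU : mD < mU := lt_of_arg_lt_neg hed
            (show w*R + mU*(d-R) < w*R + mD*(d-R) by rw [hmD]; exact hjd.2)
          have hbmD : b < mD := lt_of_arg_lt_neg hed
            (show w*R + mD*(d-R) < w*R + b*(d-R) by rw [hmD]; exact hm3 hjd.1)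
          refine hupper mD hbmD (lt_trans hmDmU hmUb2) ?_ ?_ (fun _ => hmD.ge) ?_
            (Or.inr ⟨hjd.1, hmD⟩)
          · intro h1
            have := arg_lt_of_lt_pos (W := w*R) heu hbmD
            linarith [hm1 h1]
          · intro h2
            have := arg_lt_of_lt_pos (W := w*R) heu hmDmU
            linarith [hmU.le]
          · intro h4
            have := arg_lt_of_lt_neg (W := w*R) hed hbmD
            linarith [hm4 h4]
        · refine hupper mU hbmU hmUb2 ?_ (fun _ => hmU.le) ?_ ?_
            (Or.inl ⟨hiNu, hmU⟩)
          · intro h1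
            have hxx := hf.1.1.1 i h1 (by omega)
            rw [hmU]
            exact hxx
          · intro h1
            exact le_of_not_gt (fun hl => hjd ⟨h1, hl⟩)
          · intro h4
            have := arg_lt_of_lt_neg (W := w*R) hed hbmU
            linarith [hm4 h4]
    · -- C1 violated : lower type, u binds below
      push_neg at hC1
      obtain ⟨hi1, hviol⟩ := hC1
      set lU := (xu i - w*R)/(u-R) with hlUdef
      have hlU : w*R + lU*(u-R) = xu i := by
        rw [hlUdef, div_mul_cancel₀ _ (ne_of_gt heu)]; ring
      have hlUb : lU < b := lt_of_arg_lt_pos heu (by rw [hlU]; exact hm1 hi1)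
      have hb2lU : b₂ < lU := lt_of_arg_lt_pos heu
        (show w*R + b₂*(u-R) < w*R + lU*(u-R) by rw [hlU]; exact hviol)
      by_cases hjd : j < Nd ∧ xd (j+1) < w*R + lU*(d-R)
      · set lD := (xd (j+1) - w*R)/(d-R) with hlDdef
        have hlD : w*R + lD*(d-R) = xd (j+1) := by
          rw [hlDdef, div_mul_cancel₀ _ (ne_of_lt hed)]; ring
        have hlUlD : lU < lD := lt_of_arg_lt_neg hed
          (show w*R + lD*(d-R) < w*R + lU*(d-R) by rw [hlD]; exact hjd.2)
        have hlDb : lD < b := lt_of_arg_lt_neg hed (by rw [hlD]; exact hm4 hjd.1)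
        refine hlower lD (lt_trans hb2lU hlUlD) hlDb ?_ ?_ ?_ (fun _ => hlD.le)
          (Or.inr ⟨hjd.1, hlD⟩)
        · intro h1
          have := arg_lt_of_lt_pos (W := w*R) heu hlUlD
          linarith [hlU.ge]
        · intro h2
          have := arg_lt_of_lt_pos (W := w*R) heu hlDb
          linarith [hm2 h2]
        · intro h1
          have := arg_lt_of_lt_neg (W := w*R) hed hlDb
          linarith [hm3 h1]
      · refine hlower lU hb2lU hlUb (fun _ => hlU.ge) ?_ ?_ ?_
          (Or.inl ⟨hi1, hlU⟩)
        · intro h2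
          have := arg_lt_of_lt_pos (W := w*R) heu hlUb
          linarith [hm2 h2]
        · intro h1
          have := arg_lt_of_lt_neg (W := w*R) hed hlUb
          linarith [hm3 h1]
        · intro h4
          exact le_of_not_gt (fun hl => hjd ⟨h4, hl⟩)
end

section
/- The optimal trajectory lies on the grid: for every w ∈ ℝ, the point (w, β(w)) belongs to G. -/
/-!
Off the grid both `f` and `g` are affine near the relevant arguments, so `b ↦ H(w, b)` is affine
near `β(w)`. An affine function with a local maximum is constant near it, so some `b < β(w)` is
also a maximizer, contradicting the minimality of `β(w)`. That `β(w)` is a genuine least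
maximizer comes from coercivity: a non-constant function of class `H` tends to `-∞` at `-∞`,
so `H(w, b) → -∞` as `b → ±∞`.
-/

open Filter Topology Set

lemma AffOn.mono {f : ℝ → ℝ} {s t : Set ℝ} (h : AffOn f s) (hts : t ⊆ s) : AffOn f t := by
  obtain ⟨a, c, h⟩ := h
  exact ⟨a, c, fun y hy => h y (hts hy)⟩

lemma AffOn.exists_lt_eq_of_isLocalMax {φ : ℝ → ℝ} {s : Set ℝ} {x : ℝ} (h : AffOn φ s)
    (hs : s ∈ 𝓝 x) (hmax : IsLocalMax φ x) : ∃ b < x, φ b = φ x := by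
  obtain ⟨a, c, h⟩ := h
  obtain ⟨ε, hε, hball⟩ := Metric.eventually_nhds_iff.mp (inter_mem hs hmax)
  have hnear : ∀ {y}, |y - x| = ε / 2 → y ∈ s ∧ φ y ≤ φ x := fun hy =>
    hball (by rw [Real.dist_eq, hy]; linarith)
  obtain ⟨hl, hl'⟩ := hnear (y := x - ε / 2) <| by
    rw [sub_sub_cancel_left, abs_neg, abs_of_pos]; linarith
  obtain ⟨hr, hr'⟩ := hnear (y := x + ε / 2) <| by
    rw [add_sub_cancel_left, abs_of_pos]; linarith
  have hx := h x (mem_of_mem_nhds hs)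
  refine ⟨x - ε / 2, by linarith, ?_⟩
  rw [h _ hl] at hl' ⊢
  rw [h _ hr] at hr'
  linarith

lemma ConcaveOn.le_of_forall_ge_eq {f : ℝ → ℝ} (hf : ConcaveOn ℝ univ f) {c : ℝ}
    (hc : ∀ y, c ≤ y → f y = f c) (y : ℝ) : f y ≤ f c := by
  rcases le_or_gt c y with hcy | hyc
  · exact (hc y hcy).le
  · have hslope := hf.slope_anti_adjacent (mem_univ y) (mem_univ (c + 1)) hyc (lt_add_one c)
    rw [hc _ (le_add_of_nonneg_right zero_le_one), sub_self, zero_div,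
      div_nonneg_iff] at hslope
    rcases hslope with ⟨h, -⟩ | ⟨-, h⟩ <;> linarith

lemma ConcaveOn.tendsto_atBot_of_lt {f : ℝ → ℝ} (hf : ConcaveOn ℝ univ f) {z c : ℝ}
    (hzc : z < c) (hfzc : f z < f c) : Tendsto f atBot atBot := by
  set K := (f c - f z) / (c - z)
  have hK : 0 < K := div_pos (by linarith) (by linarith)
  have hbound : ∀ y < z, f y ≤ K * y + (f z - K * z) := fun y hyz => by
    have hslope := hf.slope_anti_adjacent (mem_univ y) (mem_univ c) hyz hzc
    rw [le_div_iff₀ (by linarith)] at hslope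
    linarith
  refine tendsto_atBot_mono' _ ?_
    (tendsto_atBot_add_const_right _ (f z - K * z) (tendsto_id.const_mul_atBot hK))
  filter_upwards [eventually_lt_atBot z] with y hy using hbound y hy

namespace ClassHAux

variable {f : ℝ → ℝ} {N : ℕ} {x : ℕ → ℝ}

lemma continuous (hf : ClassHAux f N x) : Continuous f :=
  continuousOn_univ.mp (hf.2.1.continuousOn isOpen_univ)

lemma exists_forall_le (hf : ClassHAux f N x) : ∃ M, ∀ y, f y ≤ M :=
  let ⟨_, _, c, hc⟩ := hf
  ⟨f c, hf.2.1.le_of_forall_ge_eq hc⟩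

lemma tendsto_atBot (hf : ClassHAux f N x) (hnc : ∃ a b, f a ≠ f b) :
    Tendsto f atBot atBot := by
  obtain ⟨-, hconc, c, hc⟩ := hf
  have hle := hconc.le_of_forall_ge_eq hc
  obtain ⟨z, hz⟩ : ∃ z, f z < f c := by
    obtain ⟨a, b, hab⟩ := hnc
    by_contra! h
    exact hab ((le_antisymm (hle a) (h a)).trans (le_antisymm (hle b) (h b)).symm)
  have hzc : z < c := lt_of_not_ge fun h => hz.ne (hc z h)
  exact hconc.tendsto_atBot_of_lt hzc hz

end ClassHAux

lemma PWAff.exists_affOn_nhds {f : ℝ → ℝ} {N : ℕ} {x : ℕ → ℝ} (hf : PWAff f N x) {y : ℝ}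
    (hy : ∀ i ∈ Finset.Icc 1 N, y ≠ x i) : ∃ s ∈ 𝓝 y, AffOn f s := by
  obtain ⟨-, hzero, hpos⟩ := hf
  rcases Nat.eq_zero_or_pos N with hN | hN
  · exact ⟨univ, univ_mem, hzero hN⟩
  obtain ⟨hleft, hright, hmid⟩ := hpos hN
  have hIcc : ∀ {i}, 1 ≤ i → i ≤ N → i ∈ Finset.Icc 1 N := fun h1 h2 =>
    Finset.mem_Icc.mpr ⟨h1, h2⟩
  -- the breakpoints left of `y`; the last of them starts the piece containing `y`
  set T := (Finset.Icc 1 N).filter (x · < y)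
  have hmemT : ∀ {i}, 1 ≤ i → i ≤ N → i ∉ T → y < x i := fun h1 h2 hT =>
    lt_of_le_of_ne (not_lt.mp fun h => hT (Finset.mem_filter.mpr ⟨hIcc h1 h2, h⟩))
      (hy _ (hIcc h1 h2))
  rcases T.eq_empty_or_nonempty with hT | hT
  · have h1 : y < x 1 := hmemT le_rfl hN (hT ▸ Finset.notMem_empty 1)
    exact ⟨Iio (x 1), Iio_mem_nhds h1, hleft.mono Iio_subset_Iic_self⟩
  set i := T.max' hT
  obtain ⟨hi, hxi⟩ := Finset.mem_filter.mp (T.max'_mem hT)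
  obtain ⟨hi1, hiN⟩ := Finset.mem_Icc.mp hi
  rcases hiN.lt_or_eq with hiN | hiN
  · have hxi1 : y < x (i + 1) :=
      hmemT (by omega) hiN fun h => (T.le_max' _ h).not_gt (Nat.lt_succ_self i)
    exact ⟨Ioo (x i) (x (i + 1)), Ioo_mem_nhds hxi hxi1,
      (hmid i hi1 hiN).mono Ioo_subset_Icc_self⟩
  · rw [hiN] at hxi
    exact ⟨Ioi (x N), Ioi_mem_nhds hxi, hright.mono Ioi_subset_Ici_self⟩

lemma isLeast_sInf_setOf_eq_iSup {φ : ℝ → ℝ} (hφ : Continuous φ)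
    (h : Tendsto φ (cocompact ℝ) atBot) :
    IsLeast {b | ∀ y, φ y ≤ φ b} (sInf {b | φ b = ⨆ y, φ y}) := by
  obtain ⟨b₀, hb₀⟩ := hφ.exists_forall_ge h
  have hsup : ⨆ y, φ y = φ b₀ :=
    le_antisymm (ciSup_le hb₀) (le_ciSup ⟨φ b₀, forall_mem_range.mpr hb₀⟩ b₀)
  have hset : {b | φ b = ⨆ y, φ y} = {b | ∀ y, φ y ≤ φ b} := by
    ext b
    rw [mem_ofPred_eq, hsup]
    exact ⟨fun hb y => hb ▸ hb₀ y, fun hb => le_antisymm (hb₀ b) (hb b₀)⟩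
  rw [hset]
  obtain ⟨M, hM⟩ := eventually_atBot.mp
    ((h.mono_left atBot_le_cocompact).eventually (eventually_lt_atBot (φ b₀)))
  have hclosed : IsClosed {b | ∀ y, φ y ≤ φ b} := by
    simp only [ofPred_forall]
    exact isClosed_iInter fun y => isClosed_le continuous_const hφ
  have hbdd : BddBelow {b | ∀ y, φ y ≤ φ b} :=
    ⟨M, fun b hb => le_of_not_gt fun hbM => (hM b hbM.le).not_ge (hb b₀)⟩
  exact ⟨hclosed.csInf_mem ⟨b₀, hb₀⟩ hbdd, fun b hb => csInf_le hbdd hb⟩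

section Hfun

variable {R u d p : ℝ} {f g : ℝ → ℝ}

lemma continuous_Hfun (hf : Continuous f) (hg : Continuous g) (w : ℝ) :
    Continuous (Hfun R u d p f g w) := by
  unfold Hfun
  fun_prop

lemma tendsto_Hfun_cocompact (hR : 0 < R) (hdR : d < R) (hRu : R < u) (hp0 : 0 < p)
    (hp1 : p < 1) (hf : Tendsto f atBot atBot) (hg : Tendsto g atBot atBot) {Mf Mg : ℝ}
    (hfM : ∀ y, f y ≤ Mf) (hgM : ∀ y, g y ≤ Mg) (w : ℝ) :
    Tendsto (Hfun R u d p f g w) (cocompact ℝ) atBot := by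
  rw [cocompact_eq_atBot_atTop, tendsto_sup]
  constructor
  · refine (tendsto_atBot_add_right_of_ge _ ((1 - p) * Mg) ?_ fun b => ?_).const_mul_atBot
      (inv_pos.mpr hR)
    · exact (hf.comp (tendsto_atBot_add_const_left _ _
        (tendsto_id.atBot_mul_const (sub_pos.2 hRu)))).const_mul_atBot hp0
    · exact mul_le_mul_of_nonneg_left (hgM _) (sub_pos.2 hp1).le
  · refine (tendsto_atBot_add_left_of_ge _ (p * Mf) (fun b => ?_) ?_).const_mul_atBot
      (inv_pos.mpr hR)
    · exact mul_le_mul_of_nonneg_left (hfM _) hp0.le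
    · exact (hg.comp (tendsto_atBot_add_const_left _ _
        (tendsto_id.atTop_mul_const_of_neg (sub_neg.2 hdR)))).const_mul_atBot (sub_pos.2 hp1)

lemma Hfun_exists_affOn_nhds {Nu Nd : ℕ} {xu xd : ℕ → ℝ} (hf : PWAff f Nu xu)
    (hg : PWAff g Nd xd) {w b : ℝ} (hwb : (w, b) ∉ Grid R u d Nu xu Nd xd) :
    ∃ s ∈ 𝓝 b, AffOn (Hfun R u d p f g w) s := by
  simp only [Grid, Cu, Cd, mem_union, mem_iUnion, mem_ofPred_eq, not_or, not_exists] at hwb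
  obtain ⟨sf, hsf, af, cf, haf⟩ := hf.exists_affOn_nhds hwb.1
  obtain ⟨sg, hsg, ag, cg, hag⟩ := hg.exists_affOn_nhds hwb.2
  have hcu : Continuous fun b : ℝ => w * R + b * (u - R) := by fun_prop
  have hcd : Continuous fun b : ℝ => w * R + b * (d - R) := by fun_prop
  refine ⟨_, inter_mem (hcu.continuousAt.preimage_mem_nhds hsf)
    (hcd.continuousAt.preimage_mem_nhds hsg),
    R⁻¹ * (p * af * (u - R) + (1 - p) * ag * (d - R)),
    R⁻¹ * (p * (af * (w * R) + cf) + (1 - p) * (ag * (w * R) + cg)), fun b hb => ?_⟩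
  rw [Hfun, haf _ hb.1, hag _ hb.2]
  ring

end Hfun

theorem stmt_8_general (R u d p : ℝ) (hd : 0 < d) (hdR : d < R) (hRu : R < u)
    (hp0 : 0 < p) (hp1 : p < 1)
    (f g : ℝ → ℝ) (Nu Nd : ℕ) (xu xd : ℕ → ℝ)
    (hf : HasSingVals f Nu xu) (hg : HasSingVals g Nd xd)
    (hfnc : ∃ a b : ℝ, f a ≠ f b) (hgnc : ∃ a b : ℝ, g a ≠ g b) :
    ∀ w : ℝ, (w, betaFun R u d p f g w) ∈ Grid R u d Nu xu Nd xd := by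
  intro w
  obtain ⟨hf, -⟩ := hf
  obtain ⟨hg, -⟩ := hg
  obtain ⟨Mf, hfM⟩ := hf.exists_forall_le
  obtain ⟨Mg, hgM⟩ := hg.exists_forall_le
  obtain ⟨hβmax, hβleast⟩ := isLeast_sInf_setOf_eq_iSup
    (continuous_Hfun hf.continuous hg.continuous w)
    (tendsto_Hfun_cocompact (hd.trans hdR) hdR hRu hp0 hp1 (hf.tendsto_atBot hfnc)
      (hg.tendsto_atBot hgnc) hfM hgM w)
  by_contra hoff
  obtain ⟨s, hs, haff⟩ := Hfun_exists_affOn_nhds hf.1 hg.1 hoff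
  obtain ⟨b, hbβ, hb⟩ := haff.exists_lt_eq_of_isLocalMax hs (IsMaxOn.isLocalMax
    (fun y _ => hβmax y) univ_mem)
  exact hbβ.not_ge (hβleast fun y => hb ▸ hβmax y)

/-- The optimal trajectory lies on the grid: `(w, β(w)) ∈ G` for all `w`. -/
theorem stmt_8 (R u d p : ℝ) (hd : 0 < d) (hdR : d < R) (hRu : R < u)
    (hp0 : 0 < p) (hp1 : p < 1)
    (f g : ℝ → ℝ) (Nu Nd : ℕ) (xu xd : ℕ → ℝ)
    (hf : HasSingVals f Nu xu) (hg : HasSingVals g Nd xd)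
    (hNu : 1 ≤ Nu) (hNd : 1 ≤ Nd)
    (hfnc : ∃ a b : ℝ, f a ≠ f b) (hgnc : ∃ a b : ℝ, g a ≠ g b) :
    ∀ w : ℝ, (w, betaFun R u d p f g w) ∈ Grid R u d Nu xu Nd xd :=
  stmt_8_general R u d p hd hdR hRu hp0 hp1 f g Nu Nd xu xd hf hg hfnc hgnc
end

section
/- The optimal trajectory contains the half-line L^u_{N_u,N_d}: if (w, b) ∈ ℝ² satisfies wR + b(u − R) = x^u_{N_u} and wR + b(d − R) ≥ x^d_{N_d}, then β(w) = b (in particular H(w, b) = V(w)). -/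
/-! At such a point the `u`-argument of `H(w, ·)` sits at the last kink of `f` and the
`d`-argument lies beyond the last kink of `g`. A concave function that is eventually constant is
nondecreasing, so both `f` and `g` attain their maxima there and `b` maximises `H(w, ·)`. For
`b' < b` the `u`-argument drops strictly below `x^u_{N_u}`, where `f` is strictly smaller (a
genuine kink cannot have a flat piece to its left), while the `d`-argument only grows; so `b` is
the least maximiser. -/

open Set Filter Topology

lemma ConcaveOn.monotone_of_eq_on_Ici {f : ℝ → ℝ} (hf : ConcaveOn ℝ univ f) {xb : ℝ}
    (hxb : ∀ y, xb ≤ y → f y = f xb) : Monotone f := by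
  intro y y' hyy'
  rcases hyy'.eq_or_lt with rfl | hlt
  · exact le_rfl
  set z := max xb y' + 1
  have hy'z : y' < z := by simp only [z]; linarith [le_max_right xb y']
  have hxbz : xb ≤ z := by simp only [z]; linarith [le_max_left xb y']
  -- secant slopes decrease, and they vanish on `[z, z + 1]`
  have h₁ := hf.slope_anti_adjacent (mem_univ y) (mem_univ z) hlt hy'z
  have h₂ := hf.slope_anti_adjacent (mem_univ y') (mem_univ (z + 1)) hy'z (lt_add_one z)
  rw [hxb (z + 1) (by linarith), ← hxb z hxbz, sub_self, zero_div] at h₂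
  have := (le_div_iff₀ (sub_pos.2 hlt)).1 (h₂.trans h₁)
  linarith

lemma AffOn.eq_on_Ici_of_eq_on_Ici {f : ℝ → ℝ} {a xb : ℝ} (hf : AffOn f (Ici a))
    (hxb : ∀ y, xb ≤ y → f y = f xb) : ∀ y, a ≤ y → f y = f a := by
  obtain ⟨s, c, hsc⟩ := hf
  set z := max xb a
  have hxbz : xb ≤ z := le_max_left xb a
  have haz : a ≤ z := le_max_right xb a
  have hs : s = 0 := by
    have h₁ := (hsc z haz).symm.trans (hxb z hxbz)
    have h₂ := (hsc (z + 1) (mem_Ici.2 (by linarith))).symm.trans (hxb (z + 1) (by linarith))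
    linarith
  intro y hy
  rw [hsc y hy, hsc a self_mem_Ici, hs]
  ring

lemma rDeriv_eq_zero_of_eqOn_Icc {f : ℝ → ℝ} {a b c : ℝ} (hab : a < b)
    (hf : EqOn f (fun _ => c) (Icc a b)) : rDeriv f a = 0 := by
  have hev : f =ᶠ[𝓝[>] a] fun _ => c :=
    mem_of_superset (Ioo_mem_nhdsGT hab) fun y hy => hf (Ioo_subset_Icc_self hy)
  exact (hasDerivWithinAt_const a _ c |>.congr_of_eventuallyEq hev
    (hf (left_mem_Icc.2 hab.le))).derivWithin (uniqueDiffWithinAt_Ioi a)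

lemma lDeriv_eq_zero_of_eqOn_Icc {f : ℝ → ℝ} {a b c : ℝ} (hab : a < b)
    (hf : EqOn f (fun _ => c) (Icc a b)) : lDeriv f b = 0 := by
  have hev : f =ᶠ[𝓝[<] b] fun _ => c :=
    mem_of_superset (Ioo_mem_nhdsLT hab) fun y hy => hf (Ioo_subset_Icc_self hy)
  exact (hasDerivWithinAt_const b _ c |>.congr_of_eventuallyEq hev
    (hf (right_mem_Icc.2 hab.le))).derivWithin (uniqueDiffWithinAt_Iio b)

namespace HasSingVals

variable {f : ℝ → ℝ} {N : ℕ} {x : ℕ → ℝ}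

lemma eq_last_of_le (hf : HasSingVals f N x) (hN : 1 ≤ N) {y : ℝ} (hy : x N ≤ y) :
    f y = f (x N) :=
  let ⟨⟨⟨_, _, hpieces⟩, _, _, hxb⟩, _⟩ := hf
  (hpieces hN).2.1.eq_on_Ici_of_eq_on_Ici hxb y hy

lemma monotone (hf : HasSingVals f N x) : Monotone f :=
  let ⟨⟨_, hconc, _, hxb⟩, _⟩ := hf
  hconc.monotone_of_eq_on_Ici hxb

lemma le_last (hf : HasSingVals f N x) (hN : 1 ≤ N) (y : ℝ) : f y ≤ f (x N) := by
  rcases le_total y (x N) with hy | hy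
  · exact hf.monotone hy
  · exact (hf.eq_last_of_le hN hy).le

lemma lt_last_of_lt (hf : HasSingVals f N x) (hN : 1 ≤ N) {y : ℝ} (hy : y < x N) :
    f y < f (x N) := by
  -- otherwise the monotone `f` is constant on both sides of `x N`, which is then no kink
  refine (hf.le_last hN y).lt_of_ne fun hyN => ?_
  have hconst : EqOn f (fun _ => f (x N)) (Icc y (x N + 1)) := by
    intro z hz
    rcases le_total z (x N) with hzN | hzN
    · exact le_antisymm (hf.le_last hN z) (hyN ▸ hf.monotone hz.1)
    · exact hf.eq_last_of_le hN hzN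
  have hl := lDeriv_eq_zero_of_eqOn_Icc hy (hconst.mono (Icc_subset_Icc_right (by linarith)))
  have hr := rDeriv_eq_zero_of_eqOn_Icc (lt_add_one (x N))
    (hconst.mono (Icc_subset_Icc_left hy.le))
  have := hf.2 N hN le_rfl
  rw [hl, hr] at this
  exact this.false

end HasSingVals

lemma ciSup_eq_and_csInf_argmax_eq {α β : Type*} [ConditionallyCompleteLinearOrder α]
    [ConditionallyCompleteLinearOrder β] {φ : α → β} {b : α} (hle : ∀ b', φ b' ≤ φ b)
    (hlt : ∀ b' < b, φ b' < φ b) :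
    (⨆ b', φ b') = φ b ∧ sInf {b' | φ b' = ⨆ b'', φ b''} = b := by
  have hV : (⨆ b', φ b') = φ b :=
    ciSup_eq_of_forall_le_of_forall_lt_exists_gt hle fun _ h => ⟨b, h⟩
  refine ⟨hV, IsLeast.csInf_eq ⟨hV.symm, fun b' hb' => not_lt.1 fun h => ?_⟩⟩
  exact (hlt b' h).ne (hb'.trans hV)

section Hfun

variable {R u d p : ℝ} {f g : ℝ → ℝ} {w b b' : ℝ}

lemma Hfun_le_Hfun (hR : 0 < R) (hp0 : 0 ≤ p) (hp1 : p ≤ 1)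
    (hf : f (w * R + b' * (u - R)) ≤ f (w * R + b * (u - R)))
    (hg : g (w * R + b' * (d - R)) ≤ g (w * R + b * (d - R))) :
    Hfun R u d p f g w b' ≤ Hfun R u d p f g w b := by
  unfold Hfun
  gcongr

lemma Hfun_lt_Hfun (hR : 0 < R) (hp0 : 0 < p)
    (hf : f (w * R + b' * (u - R)) < f (w * R + b * (u - R)))
    (hg : g (w * R + b' * (d - R)) = g (w * R + b * (d - R))) :
    Hfun R u d p f g w b' < Hfun R u d p f g w b := by
  unfold Hfun
  rw [hg]
  gcongr

end Hfun

theorem stmt_9_general (R u d p : ℝ) (hd : 0 < d) (hdR : d < R) (hRu : R < u)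
    (hp0 : 0 < p) (hp1 : p < 1)
    (f g : ℝ → ℝ) (Nu Nd : ℕ) (xu xd : ℕ → ℝ)
    (hf : HasSingVals f Nu xu) (hg : HasSingVals g Nd xd)
    (hNu : 1 ≤ Nu) (hNd : 1 ≤ Nd)
    (w b : ℝ) (hu : w * R + b * (u - R) = xu Nu) (hdd : xd Nd ≤ w * R + b * (d - R)) :
    betaFun R u d p f g w = b ∧ Hfun R u d p f g w b = Vfun R u d p f g w := by
  have hR : 0 < R := hd.trans hdR
  have hgb : g (w * R + b * (d - R)) = g (xd Nd) := hg.eq_last_of_le hNd hdd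
  have hle : ∀ b', Hfun R u d p f g w b' ≤ Hfun R u d p f g w b := fun b' =>
    Hfun_le_Hfun hR hp0.le hp1.le (hu ▸ hf.le_last hNu _) (hgb ▸ hg.le_last hNd _)
  have hlt : ∀ b' < b, Hfun R u d p f g w b' < Hfun R u d p f g w b := fun b' hb' =>
    Hfun_lt_Hfun hR hp0 (hu ▸ hf.lt_last_of_lt hNu (by nlinarith))
      ((hg.eq_last_of_le hNd (by nlinarith)).trans hgb.symm)
  obtain ⟨hV, hβ⟩ := ciSup_eq_and_csInf_argmax_eq hle hlt
  exact ⟨hβ, hV.symm⟩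

/-- The optimal trajectory contains the half-line `L^u_{Nu,Nd}`:
if `wR + b(u−R) = x^u_{Nu}` and `wR + b(d−R) ≥ x^d_{Nd}`, then `β(w) = b`
(and in particular `H(w,b) = V(w)`). -/
theorem stmt_9 (R u d p : ℝ) (hd : 0 < d) (hdR : d < R) (hRu : R < u)
    (hp0 : 0 < p) (hp1 : p < 1)
    (f g : ℝ → ℝ) (Nu Nd : ℕ) (xu xd : ℕ → ℝ)
    (hf : HasSingVals f Nu xu) (hg : HasSingVals g Nd xd)
    (hNu : 1 ≤ Nu) (hNd : 1 ≤ Nd)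
    (hfnc : ∃ a b : ℝ, f a ≠ f b) (hgnc : ∃ a b : ℝ, g a ≠ g b)
    (w b : ℝ) (hu : w * R + b * (u - R) = xu Nu) (hdd : xd Nd ≤ w * R + b * (d - R)) :
    betaFun R u d p f g w = b ∧ Hfun R u d p f g w b = Vfun R u d p f g w :=
  stmt_9_general R u d p hd hdR hRu hp0 hp1 f g Nu Nd xu xd hf hg hNu hNd w b hu hdd
end

section
/- The minimal optimal strategy β : ℝ → ℝ, defined by β(w) = min{b ∈ ℝ : H(w, b) = V(w)}, is continuous on ℝ. -/
/-! The substitution `t = (R - d) (w R + b (u - R))` turns `H(w, ·)` into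
`R⁻¹ (F t + G (s - t))` with `s = w R (u - d)`, `F t = p f (t / (R - d))` and
`G y = (1 - p) g (y / (u - R))`. Both `F` and `G` are concave, bounded above and tend to `-∞`
at `-∞`, so `t ↦ F t + G (s - t)` has a least maximizer `T s`. Because increments of a concave
function decrease, `T` is monotone and `T s' ≤ T s + (s' - s)` for `s ≤ s'`; hence `T` is
`1`-Lipschitz, and `β(w)` is an affine expression in `T (w R (u - d))` and `w`. -/

open Set Filter

theorem ConcaveOn.map_add_sub_map_le_of_le {f : ℝ → ℝ} (hf : ConcaveOn ℝ univ f) {x y δ : ℝ}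
    (hxy : x ≤ y) (hδ : 0 ≤ δ) : f (y + δ) - f y ≤ f (x + δ) - f x := by
  rcases hxy.eq_or_lt with rfl | hxy
  · rfl
  have hL : 0 < y + δ - x := by linarith
  -- `x + δ` and `y` are the two mirror-image convex combinations of `x` and `y + δ`
  set a := (y - x) / (y + δ - x)
  have ha : 0 ≤ a := div_nonneg (by linarith) hL.le
  have ha' : 0 ≤ 1 - a := by
    rw [sub_nonneg, div_le_one hL]
    linarith
  have hxδ := hf.2 (mem_univ x) (mem_univ (y + δ)) ha ha' (by ring)
  have hy := hf.2 (mem_univ x) (mem_univ (y + δ)) ha' ha (by ring)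
  have ex : a • x + (1 - a) • (y + δ) = x + δ := by
    simp only [a, smul_eq_mul]; field_simp; ring
  have ey : (1 - a) • x + a • (y + δ) = y := by
    simp only [a, smul_eq_mul]; field_simp; ring
  rw [ex] at hxδ
  rw [ey] at hy
  simp only [smul_eq_mul] at hxδ hy
  linarith

theorem ConcaveOn.monotone_of_eventually_const {f : ℝ → ℝ} (hf : ConcaveOn ℝ univ f) {xb : ℝ}
    (hc : ∀ y, xb ≤ y → f y = f xb) : Monotone f := by
  intro y₁ y₂ h
  have hinc := hf.map_add_sub_map_le_of_le (le_max_left y₁ xb) (sub_nonneg.2 h)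
  rw [hc _ (le_max_right y₁ xb), hc _ (by linarith [le_max_right y₁ xb]), add_sub_cancel] at hinc
  linarith

theorem ConcaveOn.tendsto_atBot_of_lt_s10 {f : ℝ → ℝ} (hf : ConcaveOn ℝ univ f) {y₁ y₂ : ℝ}
    (hy : y₁ < y₂) (hfy : f y₁ < f y₂) : Tendsto f atBot atBot := by
  set m := (f y₂ - f y₁) / (y₂ - y₁)
  have hm : 0 < m := div_pos (by linarith) (by linarith)
  have hle : ∀ y < y₁, f y ≤ f y₁ + m * (y - y₁) := by
    intro y hy₁
    have hslope := hf.slope_anti_adjacent (mem_univ y) (mem_univ y₂) hy₁ hy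
    rw [le_div_iff₀ (by linarith)] at hslope
    linarith
  have hline : Tendsto (fun y => f y₁ + m * (y - y₁)) atBot atBot :=
    tendsto_atBot_add_const_left _ _ <|
      (tendsto_atBot_add_const_right _ _ tendsto_id).const_mul_atBot hm
  exact tendsto_atBot_mono' _ (eventually_lt_atBot y₁ |>.mono hle) hline

def IsCappedConcave (f : ℝ → ℝ) : Prop :=
  ConcaveOn ℝ univ f ∧ BddAbove (range f) ∧ Tendsto f atBot atBot

theorem ConcaveOn.isCappedConcave {f : ℝ → ℝ} (hf : ConcaveOn ℝ univ f) {xb : ℝ}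
    (hc : ∀ y, xb ≤ y → f y = f xb) (hnc : ∃ a b, f a ≠ f b) : IsCappedConcave f := by
  have hmono := hf.monotone_of_eventually_const hc
  refine ⟨hf, ⟨f xb, forall_mem_range.2 fun y => ?_⟩, ?_⟩
  · rcases le_total y xb with h | h
    exacts [hmono h, (hc y h).le]
  · obtain ⟨a, b, hab⟩ := hnc
    rcases lt_or_gt_of_ne (show a ≠ b by rintro rfl; exact hab rfl) with h | h
    · exact hf.tendsto_atBot_of_lt_s10 h ((hmono h.le).lt_of_ne hab)
    · exact hf.tendsto_atBot_of_lt_s10 h ((hmono h.le).lt_of_ne hab.symm)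

theorem IsCappedConcave.const_mul_comp_div {f : ℝ → ℝ} (hf : IsCappedConcave f) {c a : ℝ}
    (hc : 0 < c) (ha : 0 < a) : IsCappedConcave fun y => c * f (y / a) := by
  obtain ⟨hconc, ⟨M, hM⟩, htend⟩ := hf
  refine ⟨?_, ⟨c * M, forall_mem_range.2 fun y => ?_⟩,
    (htend.comp (tendsto_id.atBot_div_const ha)).const_mul_atBot hc⟩
  · refine ⟨convex_univ, fun x _ y _ α β hα hβ hαβ => ?_⟩
    have h := hconc.2 (mem_univ (x / a)) (mem_univ (y / a)) hα hβ hαβ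
    have e : α • (x / a) + β • (y / a) = (α • x + β • y) / a := by
      simp only [smul_eq_mul]; ring
    rw [e] at h
    simp only [smul_eq_mul] at h ⊢
    nlinarith
  · exact mul_le_mul_of_nonneg_left (hM (mem_range_self _)) hc.le

theorem IsCappedConcave.tendsto_cocompact_add_sub {F G : ℝ → ℝ} (hF : IsCappedConcave F)
    (hG : IsCappedConcave G) (s : ℝ) :
    Tendsto (fun t => F t + G (s - t)) (cocompact ℝ) atBot := by
  obtain ⟨-, ⟨MF, hMF⟩, hFbot⟩ := hF
  obtain ⟨-, ⟨MG, hMG⟩, hGbot⟩ := hG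
  have hsub : Tendsto (fun t => s - t) atTop atBot :=
    tendsto_atBot_add_const_left _ s tendsto_neg_atTop_atBot
  rw [cocompact_eq_atBot_atTop, tendsto_sup]
  exact ⟨tendsto_atBot_add_right_of_ge _ MG hFbot fun t => hMG (mem_range_self _),
    tendsto_atBot_add_left_of_ge _ MF (fun t => hMF (mem_range_self _)) (hGbot.comp hsub)⟩

def maximizers {α : Type*} (φ : α → ℝ) : Set α := {x | ∀ y, φ y ≤ φ x}

theorem setOf_eq_iSup_eq_maximizers {α : Type*} {φ : α → ℝ} (hne : (maximizers φ).Nonempty) :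
    {x | φ x = ⨆ y, φ y} = maximizers φ := by
  obtain ⟨x₀, hx₀⟩ := hne
  have : Nonempty α := ⟨x₀⟩
  have hsup : ⨆ y, φ y = φ x₀ :=
    le_antisymm (ciSup_le hx₀) (le_ciSup ⟨φ x₀, forall_mem_range.2 hx₀⟩ x₀)
  ext x
  simp only [mem_ofPred_eq, hsup]
  exact ⟨fun h y => h ▸ hx₀ y, fun h => le_antisymm (hx₀ x) (h x₀)⟩

theorem IsLeast.maximizers_const_mul_comp_affine {φ : ℝ → ℝ} {t c e m : ℝ}
    (ht : IsLeast (maximizers φ) t) (hc : 0 < c) (hm : 0 < m) :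
    IsLeast (maximizers fun b => c * φ (e + b * m)) ((t - e) / m) := by
  have he : ∀ τ, e + (τ - e) / m * m = τ := fun τ => by field_simp; ring
  refine ⟨fun b => ?_, fun b hb => ?_⟩
  · dsimp only
    rw [he]
    exact mul_le_mul_of_nonneg_left (ht.1 _) hc.le
  · have hmem : e + b * m ∈ maximizers φ := fun τ => by
      have := hb ((τ - e) / m)
      dsimp only at this
      rwa [he, mul_le_mul_iff_right₀ hc] at this
    rw [div_le_iff₀ hm]
    linarith [ht.2 hmem]

theorem exists_isLeast_maximizers {φ : ℝ → ℝ} (hφ : Continuous φ)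
    (htend : Tendsto φ (cocompact ℝ) atBot) : ∃ t, IsLeast (maximizers φ) t := by
  obtain ⟨t₀, ht₀⟩ := hφ.exists_forall_ge htend
  have hclosed : IsClosed (maximizers φ) := by
    simp only [maximizers, ofPred_forall]
    exact isClosed_iInter fun y => isClosed_le continuous_const hφ
  have hbdd : BddBelow (maximizers φ) := by
    have hbot : Tendsto φ atBot atBot :=
      htend.mono_left (cocompact_eq_atBot_atTop (α := ℝ) ▸ le_sup_left)
    obtain ⟨T, hT⟩ := eventually_atBot.1 (hbot.eventually_lt_atBot (φ t₀))
    exact ⟨T, fun t ht => le_of_not_ge fun htT => (hT t htT).not_ge (ht t₀)⟩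
  exact ⟨_, hclosed.isLeast_csInf ⟨t₀, ht₀⟩ hbdd⟩

theorem IsCappedConcave.exists_isLeast_maximizers_add_sub {F G : ℝ → ℝ}
    (hF : IsCappedConcave F) (hG : IsCappedConcave G) (s : ℝ) :
    ∃ t, IsLeast (maximizers fun t => F t + G (s - t)) t :=
  exists_isLeast_maximizers
    (hF.1.locallyLipschitz.continuous.add (hG.1.locallyLipschitz.continuous.comp (by fun_prop)))
    (hF.tendsto_cocompact_add_sub hG s)

section SupConvolution

variable {F G : ℝ → ℝ} {s s' t t' : ℝ}

theorem isLeast_maximizers_add_sub_mono (hG : ConcaveOn ℝ univ G)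
    (ht : IsLeast (maximizers fun t => F t + G (s - t)) t)
    (ht' : IsLeast (maximizers fun t => F t + G (s' - t)) t') (hs : s ≤ s') : t ≤ t' := by
  by_contra! hlt
  have hinc := hG.map_add_sub_map_le_of_le (sub_le_sub_right hs t) (sub_nonneg.2 hlt.le)
  simp only [sub_add_sub_cancel] at hinc
  have hmem : t' ∈ maximizers fun t => F t + G (s - t) := fun y => by
    linarith [ht.1 y, ht'.1 t]
  exact (ht.2 hmem).not_gt hlt

theorem isLeast_maximizers_add_sub_le_add (hF : ConcaveOn ℝ univ F)
    (ht : IsLeast (maximizers fun t => F t + G (s - t)) t)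
    (ht' : IsLeast (maximizers fun t => F t + G (s' - t)) t') (hs : s ≤ s') :
    t' ≤ t + (s' - s) := by
  by_contra! hlt
  have hinc := hF.map_add_sub_map_le_of_le (le_sub_iff_add_le.2 hlt.le) (sub_nonneg.2 hs)
  rw [sub_add_cancel] at hinc
  have e₁ : s' - (t + (s' - s)) = s - t := by ring
  have e₂ : s - (t' - (s' - s)) = s' - t' := by ring
  have hmax := ht.1 (t' - (s' - s))
  dsimp only at hmax
  rw [e₂] at hmax
  have hmem : t + (s' - s) ∈ maximizers fun t => F t + G (s' - t) := fun y => by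
    dsimp only
    rw [e₁]
    linarith [ht'.1 y]
  exact (ht'.2 hmem).not_gt hlt

theorem lipschitzWith_one_of_isLeast_maximizers_add_sub (hF : ConcaveOn ℝ univ F)
    (hG : ConcaveOn ℝ univ G) {T : ℝ → ℝ}
    (hT : ∀ s, IsLeast (maximizers fun t => F t + G (s - t)) (T s)) : LipschitzWith 1 T := by
  refine LipschitzWith.of_le_add fun s s' => ?_
  rcases le_total s s' with hs | hs
  · linarith [isLeast_maximizers_add_sub_mono hG (hT s) (hT s') hs, dist_nonneg (x := s) (y := s')]
  · linarith [isLeast_maximizers_add_sub_le_add hF (hT s') (hT s) hs, Real.dist_eq s s',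
      le_abs_self (s - s')]

end SupConvolution

/-- The minimal optimal strategy `β` is continuous on `ℝ`. -/
theorem stmt_10 (R u d p : ℝ) (hd : 0 < d) (hdR : d < R) (hRu : R < u)
    (hp0 : 0 < p) (hp1 : p < 1)
    (f g : ℝ → ℝ) (hf : ClassH f) (hg : ClassH g)
    (hfnc : ∃ a b : ℝ, f a ≠ f b) (hgnc : ∃ a b : ℝ, g a ≠ g b) :
    Continuous (betaFun R u d p f g) := by
  obtain ⟨-, -, -, hfco, _, hfc⟩ := hf
  obtain ⟨-, -, -, hgco, _, hgc⟩ := hg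
  have hA : 0 < u - R := sub_pos.2 hRu
  have hC : 0 < R - d := sub_pos.2 hdR
  set F : ℝ → ℝ := fun y => p * f (y / (R - d))
  set G : ℝ → ℝ := fun y => (1 - p) * g (y / (u - R))
  have hF : IsCappedConcave F := (hfco.isCappedConcave hfc hfnc).const_mul_comp_div hp0 hC
  have hG : IsCappedConcave G :=
    (hgco.isCappedConcave hgc hgnc).const_mul_comp_div (sub_pos.2 hp1) hA
  choose T hT using hF.exists_isLeast_maximizers_add_sub hG
  have hβ : ∀ w, betaFun R u d p f g w =
      (T (w * R * (u - d)) - (R - d) * (w * R)) / ((R - d) * (u - R)) := by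
    intro w
    have hH : Hfun R u d p f g w = fun b => R⁻¹ *
        (F ((R - d) * (w * R) + b * ((R - d) * (u - R))) +
          G (w * R * (u - d) - ((R - d) * (w * R) + b * ((R - d) * (u - R))))) := by
      ext b
      simp only [Hfun, F, G]
      congr 4 <;> field_simp
      ring
    have hleast := (hT (w * R * (u - d))).maximizers_const_mul_comp_affine
      (inv_pos.2 (hd.trans hdR)) (e := (R - d) * (w * R)) (mul_pos hC hA)
    rw [← hH, ← setOf_eq_iSup_eq_maximizers hleast.nonempty] at hleast
    exact hleast.csInf_eq
  rw [funext hβ]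
  exact (((lipschitzWith_one_of_isLeast_maximizers_add_sub hF.1 hG.1 hT).continuous.comp
    (by fun_prop)).sub (by fun_prop)).div_const _
end

section
/- The value function V : ℝ → ℝ, defined by V(w) = sup_{b ∈ ℝ} H(w, b), is continuous on ℝ. -/
/-- A class-`H` function is bounded above. -/
lemma classH_le_bound {f : ℝ → ℝ} (hf : ClassH f) : ∃ M : ℝ, ∀ y, f y ≤ M := by
  obtain ⟨N, x, _, conc, xb, hxb⟩ := hf
  refine ⟨f xb, fun y => ?_⟩
  rcases le_or_gt xb y with h | h
  · exact (hxb y h).le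
  · have hz : xb ≤ 2 * xb - y := by linarith
    have h2 := conc.2 (Set.mem_univ y) (Set.mem_univ (2 * xb - y))
      (by norm_num : (0:ℝ) ≤ 1/2) (by norm_num : (0:ℝ) ≤ 1/2) (by norm_num)
    simp only [smul_eq_mul] at h2
    have harg : (1/2 : ℝ) * y + (1/2) * (2 * xb - y) = xb := by ring
    rw [harg, hxb _ hz] at h2
    linarith

/-- The value function `V(w) = sup_b H(w,b)` is continuous on `ℝ`. -/
theorem stmt_11 (R u d p : ℝ) (hd : 0 < d) (hdR : d < R) (hRu : R < u)
    (hp0 : 0 < p) (hp1 : p < 1)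
    (f g : ℝ → ℝ) (hf : ClassH f) (hg : ClassH g)
    (hfnc : ∃ a b : ℝ, f a ≠ f b) (hgnc : ∃ a b : ℝ, g a ≠ g b) :
    Continuous (Vfun R u d p f g) := by
  have hR : 0 < R := hd.trans hdR
  have hRi : 0 < R⁻¹ := inv_pos.mpr hR
  have hq : 0 < 1 - p := by linarith
  obtain ⟨Mf, hMf⟩ := classH_le_bound hf
  obtain ⟨Mg, hMg⟩ := classH_le_bound hg
  obtain ⟨Nf, xf, _, concf, _⟩ := hf
  obtain ⟨Ng, xg, _, concg, _⟩ := hg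
  set M : ℝ := R⁻¹ * (p * Mf + (1 - p) * Mg) with hM
  have hbdd : ∀ w b, Hfun R u d p f g w b ≤ M := by
    intro w b
    unfold Hfun
    rw [hM]
    gcongr
    · exact hMf _
    · exact hMg _
  have hbr : ∀ w, BddAbove (Set.range (Hfun R u d p f g w)) := by
    intro w
    refine ⟨M, ?_⟩
    rintro y ⟨b, rfl⟩
    exact hbdd w b
  -- joint concavity of H along segments
  have key : ∀ w1 w2 b1 b2 a c : ℝ, 0 ≤ a → 0 ≤ c → a + c = 1 →
      a * Hfun R u d p f g w1 b1 + c * Hfun R u d p f g w2 b2 ≤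
        Hfun R u d p f g (a * w1 + c * w2) (a * b1 + c * b2) := by
    intro w1 w2 b1 b2 a c ha hc hac
    have hfc := concf.2 (Set.mem_univ (w1 * R + b1 * (u - R)))
      (Set.mem_univ (w2 * R + b2 * (u - R))) ha hc hac
    have hgc := concg.2 (Set.mem_univ (w1 * R + b1 * (d - R)))
      (Set.mem_univ (w2 * R + b2 * (d - R))) ha hc hac
    simp only [smul_eq_mul] at hfc hgc
    unfold Hfun
    have hargu : (a * w1 + c * w2) * R + (a * b1 + c * b2) * (u - R)
        = a * (w1 * R + b1 * (u - R)) + c * (w2 * R + b2 * (u - R)) := by ring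
    have hargd : (a * w1 + c * w2) * R + (a * b1 + c * b2) * (d - R)
        = a * (w1 * R + b1 * (d - R)) + c * (w2 * R + b2 * (d - R)) := by ring
    rw [hargu, hargd]
    calc a * (R⁻¹ * (p * f (w1 * R + b1 * (u - R)) + (1 - p) * g (w1 * R + b1 * (d - R))))
          + c * (R⁻¹ * (p * f (w2 * R + b2 * (u - R)) + (1 - p) * g (w2 * R + b2 * (d - R))))
        = R⁻¹ * (p * (a * f (w1 * R + b1 * (u - R)) + c * f (w2 * R + b2 * (u - R)))
            + (1 - p) * (a * g (w1 * R + b1 * (d - R)) + c * g (w2 * R + b2 * (d - R)))) := by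
          ring
      _ ≤ R⁻¹ * (p * f (a * (w1 * R + b1 * (u - R)) + c * (w2 * R + b2 * (u - R)))
            + (1 - p) * g (a * (w1 * R + b1 * (d - R)) + c * (w2 * R + b2 * (d - R)))) := by
          gcongr
  have hVconc : ConcaveOn ℝ Set.univ (Vfun R u d p f g) := by
    refine ⟨convex_univ, ?_⟩
    intro w1 _ w2 _ a c ha hc hac
    simp only [smul_eq_mul]
    have hVle : ∀ w T, (∀ b, Hfun R u d p f g w b ≤ T) → Vfun R u d p f g w ≤ T :=
      fun w T h => ciSup_le h
    have hleV : ∀ w b, Hfun R u d p f g w b ≤ Vfun R u d p f g w :=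
      fun w b => le_ciSup (hbr w) b
    rcases eq_or_lt_of_le ha with rfl | ha'
    · have hc1 : c = 1 := by linarith
      subst hc1
      simp
    rcases eq_or_lt_of_le hc with rfl | hc'
    · have ha1 : a = 1 := by linarith
      subst ha1
      simp
    have step1 : ∀ b1 b2, a * Hfun R u d p f g w1 b1 + c * Hfun R u d p f g w2 b2 ≤
        Vfun R u d p f g (a * w1 + c * w2) :=
      fun b1 b2 => (key w1 w2 b1 b2 a c ha hc hac).trans (hleV _ _)
    have step2 : ∀ b1, a * Hfun R u d p f g w1 b1 + c * Vfun R u d p f g w2 ≤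
        Vfun R u d p f g (a * w1 + c * w2) := by
      intro b1
      have h2 : Vfun R u d p f g w2 ≤
          (Vfun R u d p f g (a * w1 + c * w2) - a * Hfun R u d p f g w1 b1) / c := by
        refine hVle _ _ fun b2 => ?_
        rw [le_div_iff₀ hc']
        nlinarith [step1 b1 b2]
      have h3 := mul_le_mul_of_nonneg_left h2 hc
      rw [mul_div_cancel₀ _ (ne_of_gt hc')] at h3
      linarith
    have h4 : Vfun R u d p f g w1 ≤
        (Vfun R u d p f g (a * w1 + c * w2) - c * Vfun R u d p f g w2) / a := by
      refine hVle _ _ fun b1 => ?_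
      rw [le_div_iff₀ ha']
      nlinarith [step2 b1]
    have h5 := mul_le_mul_of_nonneg_left h4 ha
    rw [mul_div_cancel₀ _ (ne_of_gt ha')] at h5
    linarith
  have hcont : ContinuousOn (Vfun R u d p f g) Set.univ :=
    hVconc.continuousOn isOpen_univ
  exact continuousOn_univ.mp hcont
end
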